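/- arXiv:0808.1657 — 5 statements merged into one kernel-verified Lean document; each statement's English description precedes it below -/
import Mathlib

section
/- There is an algorithm that, given an integer k ≥ 2, a DFAO M generating a k-automatic sequence a = (a_n)_{n≥0}, and a rational number r > 1, decides whether a avoids r-powers; similarly it is decidable whether a avoids r^+-powers. -/
/-- Run an encoded DFAO transition table from state `q` on a list of base-`k`
digits, least significant digit first (this is `w^R` for a most-significant-first
representation `w`). -/
def dfaoRun (trans : List (List ℕ)) : ℕ → List ℕ → ℕ
  | q, [] => q
  | q, d :: ds => dfaoRun trans ((trans.getD q []).getD d 0) ds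

/-- The encoded DFAO `(trans, q0, out)` over input alphabet `Σ_k = {0,…,k-1}`
generates the sequence `a`: for every `m` and every base-`k` representation `w`
of `m` (given least significant digit first, possibly with trailing zeros,
all digits `< k`), the output on `w` is `a m`. -/
def dfaoGenerates (k : ℕ) (trans : List (List ℕ)) (q0 : ℕ) (out : List ℕ)
    (a : ℕ → ℕ) : Prop :=
  ∀ (m : ℕ) (w : List ℕ), (∀ d ∈ w, d < k) → Nat.ofDigits k w = m →
    a m = out.getD (dfaoRun trans q0 w) 0

/-- The factor `a_i a_{i+1} ⋯ a_{i+L-1}` of the sequence `a`. -/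
def factorAt (a : ℕ → ℕ) (i L : ℕ) : List ℕ :=
  (List.range L).map fun j => a (i + j)

/-- `w` is a factor of the infinite word `a`. -/
def IsFactorOf (a : ℕ → ℕ) (w : List ℕ) : Prop :=
  ∃ i : ℕ, w = factorAt a i w.length

/-- `z` is an `r`-power `x^r` for `r = p/q` built from a word `x` of length `T`:
`z` is the shortest prefix of `x^ω` of length `≥ (p/q)·T`, i.e. `z` has length
`⌈(p/q)·T⌉`, has period `T`, and `x` is its prefix of length `T`. -/
def IsRPowerOf (p q T : ℕ) (z : List ℕ) : Prop :=
  1 ≤ T ∧ T ≤ z.length ∧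
    (∀ j : ℕ, j + T < z.length → z.getD j 0 = z.getD (j + T) 0) ∧
    p * T ≤ q * z.length ∧ q * (z.length - 1) < p * T

/-- `z` is an `r⁺`-power for `r = p/q` built from a word `x` of length `T`:
`z` is the shortest prefix of `x^ω` of length `> (p/q)·T`. -/
def IsRPlusPowerOf (p q T : ℕ) (z : List ℕ) : Prop :=
  1 ≤ T ∧ T ≤ z.length ∧
    (∀ j : ℕ, j + T < z.length → z.getD j 0 = z.getD (j + T) 0) ∧
    p * T < q * z.length ∧ q * (z.length - 1) ≤ p * T

/-- `z` is an `r`-power for `r = p/q`. -/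
def IsRPower (p q : ℕ) (z : List ℕ) : Prop :=
  ∃ T : ℕ, IsRPowerOf p q T z

/-- `z` is an `r⁺`-power for `r = p/q`. -/
def IsRPlusPower (p q : ℕ) (z : List ℕ) : Prop :=
  ∃ T : ℕ, IsRPlusPowerOf p q T z

/-!
A repetition `a (I + j) = a (I + T + j)` for `q * j + δ ≤ (p - q) * T` is controlled, at each
base-`k` level `ℓ`, by finitely many data per low residue `j₀ < k ^ ℓ` of the offset: the
automaton states after the low `ℓ` digits of `I + j₀` and `I + T + j₀`, the two carries into the
high digits, and the integer `⌊((p - q) t - q j₀ - δ) / k ^ ℓ⌋`, which is what remains of the window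
inequality for the high digits. Whether the repetition survives any change of the high digits of
`I` and `T` depends only on the set of these data, the signature of level `ℓ`. Signatures lie in
a finite set whose size `N` is computable from the automaton, so once `I, T < k ^ ℓ` with `ℓ > N`
two levels share a signature, and deleting the digits between them gives a repetition with
shorter `I` and `T`. Hence a repetition exists iff one with `I, T < k ^ N` does: a finite search.
-/

namespace AutomaticRepetition

def lowDigits (k ℓ u : ℕ) : List ℕ := (List.range ℓ).map fun e => u / k ^ e % k

@[simp]
lemma length_lowDigits (k ℓ u : ℕ) : (lowDigits k ℓ u).length = ℓ := by simp [lowDigits]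

lemma lowDigits_succ (k ℓ u : ℕ) : lowDigits k (ℓ + 1) u = u % k :: lowDigits k ℓ (u / k) := by
  simp only [lowDigits, List.range_succ_eq_map, List.map_cons, List.map_map, pow_zero,
    Nat.div_one]
  congr 1
  refine List.map_congr_left fun e _ => ?_
  simp [pow_succ', Nat.div_div_eq_div_mul]

lemma lt_of_mem_lowDigits {k ℓ u d : ℕ} (hk : 0 < k) (hd : d ∈ lowDigits k ℓ u) : d < k := by
  obtain ⟨e, -, rfl⟩ := List.mem_map.1 hd
  exact Nat.mod_lt _ hk

lemma ofDigits_lowDigits (k ℓ u : ℕ) : Nat.ofDigits k (lowDigits k ℓ u) = u % k ^ ℓ := by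
  induction ℓ generalizing u with
  | zero => simp [lowDigits, Nat.mod_one]
  | succ ℓ ih => rw [lowDigits_succ, Nat.ofDigits_cons, ih, pow_succ', Nat.mod_mul]

lemma dfaoRun_append (trans : List (List ℕ)) (q : ℕ) (w w' : List ℕ) :
    dfaoRun trans q (w ++ w') = dfaoRun trans (dfaoRun trans q w) w' := by
  induction w generalizing q with
  | nil => rfl
  | cons d w ih => exact ih _

lemma dfaoRun_eq_foldl (trans : List (List ℕ)) (q : ℕ) (w : List ℕ) :
    dfaoRun trans q w = w.foldl (fun s d => (trans.getD s []).getD d 0) q := by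
  induction w generalizing q with
  | nil => rfl
  | cons d w ih => exact ih _

/-- Every state reached after a step is `0` or an entry of the table. -/
lemma dfaoRun_le (trans : List (List ℕ)) (q : ℕ) (w : List ℕ) :
    dfaoRun trans q w ≤ q + trans.flatten.sum := by
  have hstep (s d : ℕ) : (trans.getD s []).getD d 0 ≤ trans.flatten.sum := by
    rw [List.getD_eq_getElem?_getD, List.getD_eq_getElem?_getD]
    rcases hs : trans[s]? with _ | row
    · simp
    rw [Option.getD_some]
    rcases hd : row[d]? with _ | x
    · simp
    exact List.le_sum_of_mem (List.mem_flatten_of_mem (List.mem_of_getElem? hs)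
      (List.mem_of_getElem? hd))
  suffices ∀ s ≤ q + trans.flatten.sum, dfaoRun trans s w ≤ q + trans.flatten.sum from
    this q (Nat.le_add_right _ _)
  induction w with
  | nil => exact fun _ hs => hs
  | cons d w ih => exact fun s _ => ih _ ((hstep s d).trans (Nat.le_add_left _ _))

/-- `a` is computed from states: `σ ℓ u` is the state reached on the `ℓ` low digits of `u`, and
`F s` is the sequence produced from state `s`, so `m ↦ a (u + k ^ ℓ * m)` is `F (σ ℓ u)`
(an element of the `k`-kernel of `a`). -/
def HasStateDecomposition (k : ℕ) (σ F : ℕ → ℕ → ℕ) (a : ℕ → ℕ) : Prop :=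
  ∀ ℓ n, a n = F (σ ℓ (n % k ^ ℓ)) (n / k ^ ℓ)

section Automaton

variable {k : ℕ} {trans : List (List ℕ)} {q0 : ℕ} {out : List ℕ} {a : ℕ → ℕ}

lemma hasStateDecomposition_of_dfaoGenerates (hk : 1 < k) (h : dfaoGenerates k trans q0 out a) :
    HasStateDecomposition k (fun ℓ u => dfaoRun trans q0 (lowDigits k ℓ u))
      (fun s m => out.getD (dfaoRun trans s (Nat.digits k m)) 0) a := by
  intro ℓ n
  have hdigits : ∀ d ∈ lowDigits k ℓ (n % k ^ ℓ) ++ Nat.digits k (n / k ^ ℓ), d < k := by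
    intro d hd
    rcases List.mem_append.1 hd with hd | hd
    · exact lt_of_mem_lowDigits (by omega) hd
    · exact Nat.digits_lt_base hk hd
  have hvalue : Nat.ofDigits k (lowDigits k ℓ (n % k ^ ℓ) ++ Nat.digits k (n / k ^ ℓ)) = n := by
    simp [Nat.ofDigits_append, ofDigits_lowDigits, Nat.ofDigits_digits, Nat.mod_add_div]
  rw [h n _ hdigits hvalue, dfaoRun_append]

/-- Reading `n` digits of `n` suffices, since `n < k ^ n`. -/
def dfaoEval (k : ℕ) (trans : List (List ℕ)) (q0 : ℕ) (out : List ℕ) (n : ℕ) : ℕ :=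
  out.getD (dfaoRun trans q0 (lowDigits k n n)) 0

lemma eq_dfaoEval_of_dfaoGenerates (hk : 1 < k) (h : dfaoGenerates k trans q0 out a) :
    a = dfaoEval k trans q0 out := by
  funext n
  refine h n _ (fun d hd => lt_of_mem_lowDigits (by omega) hd) ?_
  rw [ofDigits_lowDigits, Nat.mod_eq_of_lt (Nat.lt_pow_self hk)]

end Automaton

/-- With `c = p - q`, a `p/q`-power of period `T` at `I` when `δ = 1`, and a `(p/q)⁺`-power
when `δ = 0`. -/
def IsRepetition (a : ℕ → ℕ) (q c δ I T : ℕ) : Prop :=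
  1 ≤ T ∧ ∀ j, q * j + δ ≤ c * T → a (I + j) = a (I + T + j)

/-- Common form of `IsRPowerOf` (`δ = 1`) and `IsRPlusPowerOf` (`δ = 0`). -/
def IsPowerOf (p q δ T : ℕ) (z : List ℕ) : Prop :=
  1 ≤ T ∧ T ≤ z.length ∧
    (∀ j : ℕ, j + T < z.length → z.getD j 0 = z.getD (j + T) 0) ∧
    p * T + 1 ≤ q * z.length + δ ∧ q * (z.length - 1) + δ ≤ p * T

lemma isRPowerOf_iff {p q T : ℕ} {z : List ℕ} : IsRPowerOf p q T z ↔ IsPowerOf p q 1 T z := by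
  simp only [IsRPowerOf, IsPowerOf]
  constructor <;> rintro ⟨h₁, h₂, h₃, h₄, h₅⟩ <;> exact ⟨h₁, h₂, h₃, by omega, by omega⟩

lemma isRPlusPowerOf_iff {p q T : ℕ} {z : List ℕ} :
    IsRPlusPowerOf p q T z ↔ IsPowerOf p q 0 T z := by
  simp only [IsRPlusPowerOf, IsPowerOf]
  constructor <;> rintro ⟨h₁, h₂, h₃, h₄, h₅⟩ <;> exact ⟨h₁, h₂, h₃, by omega, by omega⟩

lemma getD_factorAt (a : ℕ → ℕ) {i L j : ℕ} (h : j < L) :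
    (factorAt a i L).getD j 0 = a (i + j) := by
  simp [factorAt, h]

lemma add_lt_iff_of_length {p q δ T L j : ℕ} (hqp : q ≤ p)
    (h₁ : p * T + 1 ≤ q * L + δ) (h₂ : q * (L - 1) + δ ≤ p * T) :
    j + T < L ↔ q * j + δ ≤ (p - q) * T := by
  rw [Nat.sub_mul]
  constructor
  · intro h
    have := Nat.mul_le_mul_left q (show j + T ≤ L - 1 by omega)
    rw [mul_add] at this
    have := Nat.mul_le_mul_right T hqp
    omega
  · intro h
    refine Nat.lt_of_mul_lt_mul_left (a := q) ?_
    have := Nat.mul_le_mul_right T hqp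
    rw [mul_add]
    omega

lemma exists_length {p q δ T : ℕ} (hq : 0 < q) (hqp : q < p) (hδ : δ ≤ q) (hT : 1 ≤ T) :
    ∃ L, T ≤ L ∧ p * T + 1 ≤ q * L + δ ∧ q * (L - 1) + δ ≤ p * T := by
  have hqT := Nat.mul_le_mul_right T hqp.le
  have hpT : q < p * T := hqp.trans_le (Nat.le_mul_of_pos_right p hT)
  have hdiv := Nat.div_add_mod (p * T - δ) q
  have hmod := Nat.mod_lt (p * T - δ) hq
  refine ⟨(p * T - δ) / q + 1, ?_, ?_, ?_⟩
  · have : T - 1 ≤ (p * T - δ) / q := by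
      rw [Nat.le_div_iff_mul_le hq, Nat.sub_mul, one_mul, Nat.mul_comm]
      omega
    omega
  · rw [mul_add, mul_one]
    omega
  · rw [Nat.add_sub_cancel]
    omega

lemma exists_isPowerOf_factor_iff {a : ℕ → ℕ} {p q δ : ℕ} (hq : 0 < q) (hqp : q < p)
    (hδ : δ ≤ q) :
    (∃ z, IsFactorOf a z ∧ ∃ T, IsPowerOf p q δ T z) ↔ ∃ I T, IsRepetition a q (p - q) δ I T := by
  constructor
  · rintro ⟨z, ⟨I, hz⟩, T, hT, -, hper, h₁, h₂⟩
    refine ⟨I, T, hT, fun j hj => ?_⟩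
    have hjT := (add_lt_iff_of_length hqp.le h₁ h₂).2 hj
    have := hper j hjT
    rw [hz, getD_factorAt a (by omega), getD_factorAt a hjT] at this
    rw [this, Nat.add_assoc, Nat.add_comm j]
  · rintro ⟨I, T, hT, hrep⟩
    obtain ⟨L, hTL, h₁, h₂⟩ := exists_length hq hqp hδ hT
    refine ⟨factorAt a I L, ⟨I, by simp [factorAt]⟩, T, hT, by simpa [factorAt] using hTL,
      fun j hj => ?_, by simpa [factorAt] using h₁, by simpa [factorAt] using h₂⟩
    simp only [factorAt, List.length_map, List.length_range] at hj
    rw [getD_factorAt a (by omega), getD_factorAt a hj,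
      hrep j ((add_lt_iff_of_length hqp.le h₁ h₂).1 hj), Nat.add_assoc, Nat.add_comm T]

lemma mod_add_mul_div_lt {x A B C : ℕ} (hA : 0 < A) (hx : x < B * C) :
    x % A + A * (x / B) < A * C := by
  have := Nat.mul_le_mul_left A (Nat.succ_le_of_lt (Nat.div_lt_of_lt_mul hx))
  rw [Nat.succ_eq_add_one, mul_add, mul_one] at this
  have := Nat.mod_lt x hA
  omega

lemma forall_eq_mod_add_mul_div {K : ℕ} (hK : 0 < K) {P : ℕ → Prop} :
    (∀ j, P j) ↔ ∀ j₀ < K, ∀ j₁, P (j₀ + K * j₁) :=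
  ⟨fun h _ _ _ => h _, fun h j => Nat.mod_add_div j K ▸ h _ (Nat.mod_lt _ hK) _⟩

lemma window_le_iff {K : ℕ} (hK : 0 < K) (q c δ t j₀ j₁ tz : ℕ) :
    q * (j₀ + K * j₁) + δ ≤ c * (t + K * tz) ↔
      (q * j₁ - c * tz : ℤ) ≤ (c * t - q * j₀ - δ : ℤ) / K := by
  rw [Int.le_ediv_iff_mul_le (by exact_mod_cast hK)]
  zify
  constructor <;> intro h <;> linarith

section Pumping

variable {k B : ℕ} {σ F : ℕ → ℕ → ℕ} {a : ℕ → ℕ}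

lemma HasStateDecomposition.apply_add_pow_mul (ha : HasStateDecomposition k σ F a) (hk : 0 < k)
    (ℓ x y : ℕ) : a (x + k ^ ℓ * y) = F (σ ℓ (x % k ^ ℓ)) (x / k ^ ℓ + y) := by
  rw [ha ℓ, Nat.add_mul_mod_self_left, Nat.add_mul_div_left _ _ (Nat.pow_pos hk)]

/-- The data of the offset residue `j₀` for the low parts `i, t < k ^ ℓ` of `I, T`: the slack
left in the window inequality, then state and carry for `I + j₀`, then for `I + T + j₀`. -/
def residueData (σ : ℕ → ℕ → ℕ) (k q c δ ℓ i t j₀ : ℕ) : ℤ × ℕ × ℕ × ℕ × ℕ :=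
  ((c * t - q * j₀ - δ : ℤ) / (k ^ ℓ : ℕ),
    σ ℓ ((i + j₀) % k ^ ℓ), (i + j₀) / k ^ ℓ, σ ℓ ((i + t + j₀) % k ^ ℓ), (i + t + j₀) / k ^ ℓ)

/-- What residue data `τ` demands of the high parts `iz, tz` of `I, T`. -/
def ResidueCond (F : ℕ → ℕ → ℕ) (q c : ℕ) (τ : ℤ × ℕ × ℕ × ℕ × ℕ) (iz tz : ℕ) : Prop :=
  ∀ j₁ : ℕ, (q * j₁ - c * tz : ℤ) ≤ τ.1 →
    F τ.2.1 (τ.2.2.1 + (iz + j₁)) = F τ.2.2.2.1 (τ.2.2.2.2 + (iz + tz + j₁))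

def signature (σ : ℕ → ℕ → ℕ) (k q c δ ℓ i t : ℕ) : Bool × Finset (ℤ × ℕ × ℕ × ℕ × ℕ) :=
  (decide (1 ≤ t), (Finset.range (k ^ ℓ)).image (residueData σ k q c δ ℓ i t))

lemma isRepetition_iff_signature (ha : HasStateDecomposition k σ F a) (hk : 0 < k)
    (q c δ ℓ i t iz tz : ℕ) :
    IsRepetition a q c δ (i + k ^ ℓ * iz) (t + k ^ ℓ * tz) ↔
      ((signature σ k q c δ ℓ i t).1 ∨ 1 ≤ tz) ∧
        ∀ τ ∈ (signature σ k q c δ ℓ i t).2, ResidueCond F q c τ iz tz := by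
  have hK : 0 < k ^ ℓ := Nat.pow_pos hk
  simp only [IsRepetition, signature, decide_eq_true_eq, Finset.forall_mem_image,
    Finset.mem_range]
  refine and_congr ⟨fun h => ?_, fun h => ?_⟩ ((forall_eq_mod_add_mul_div hK).trans ?_)
  · by_contra! h'
    obtain ⟨rfl, rfl⟩ : t = 0 ∧ tz = 0 := by omega
    simp at h
  · rcases h with h | h
    · omega
    · nlinarith
  refine forall₂_congr fun j₀ hj₀ => forall_congr' fun j₁ => ?_
  rw [window_le_iff hK]
  have hI : i + k ^ ℓ * iz + (j₀ + k ^ ℓ * j₁) = i + j₀ + k ^ ℓ * (iz + j₁) := by ring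
  have hIT : i + k ^ ℓ * iz + (t + k ^ ℓ * tz) + (j₀ + k ^ ℓ * j₁) =
      i + t + j₀ + k ^ ℓ * (iz + tz + j₁) := by ring
  rw [hI, hIT, ha.apply_add_pow_mul hk, ha.apply_add_pow_mul hk]
  rfl

lemma isRepetition_iff_of_signature_eq (ha : HasStateDecomposition k σ F a) (hk : 0 < k)
    {q c δ ℓ i t ℓ' i' t' : ℕ}
    (h : signature σ k q c δ ℓ i t = signature σ k q c δ ℓ' i' t') (iz tz : ℕ) :
    IsRepetition a q c δ (i + k ^ ℓ * iz) (t + k ^ ℓ * tz) ↔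
      IsRepetition a q c δ (i' + k ^ ℓ' * iz) (t' + k ^ ℓ' * tz) := by
  rw [isRepetition_iff_signature ha hk, isRepetition_iff_signature ha hk, h]

/-- For `i, t < k ^ ℓ` the residue data are bounded: the slack lies in `[-(q + δ), c]`, the
carries are below `2` and `3`, and the states are at most `B`. -/
noncomputable def signatureUniverse (q c δ B : ℕ) : Finset (Bool × Finset (ℤ × ℕ × ℕ × ℕ × ℕ)) :=
  Finset.univ ×ˢ (Finset.Icc (-(q + δ : ℤ)) c ×ˢ Finset.range (B + 1) ×ˢ Finset.range 2 ×ˢ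
    Finset.range (B + 1) ×ˢ Finset.range 3).powerset

def signatureCount (q c δ B : ℕ) : ℕ :=
  2 * 2 ^ ((q + δ + c + 1) * ((B + 1) * (2 * ((B + 1) * 3))))

lemma card_signatureUniverse (q c δ B : ℕ) :
    (signatureUniverse q c δ B).card = signatureCount q c δ B := by
  simp only [signatureUniverse, Finset.card_product, Finset.card_powerset, Finset.card_univ,
    Fintype.card_bool, Int.card_Icc, Finset.card_range]
  congr
  omega

lemma signature_mem_signatureUniverse (hk : 0 < k) (hσ : ∀ ℓ u, σ ℓ u ≤ B)
    {q c δ ℓ i t : ℕ} (hi : i < k ^ ℓ) (ht : t < k ^ ℓ) :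
    signature σ k q c δ ℓ i t ∈ signatureUniverse q c δ B := by
  have hK : 0 < k ^ ℓ := Nat.pow_pos hk
  have hKz : (0 : ℤ) < (k ^ ℓ : ℕ) := by exact_mod_cast hK
  simp only [signature, signatureUniverse, Finset.mem_product, Finset.mem_univ, true_and,
    Finset.mem_powerset]
  intro τ hτ
  obtain ⟨j₀, hj₀, rfl⟩ := Finset.mem_image.1 hτ
  rw [Finset.mem_range] at hj₀
  simp only [residueData, Finset.mem_product, Finset.mem_Icc, Finset.mem_range,
    Nat.lt_succ_iff.2 (hσ _ _), true_and, Nat.div_lt_iff_lt_mul hK]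
  refine ⟨⟨?_, Int.ediv_le_of_le_mul hKz ?_⟩, by omega, by omega⟩
  · rw [Int.le_ediv_iff_mul_le hKz]
    have : (j₀ : ℤ) + 1 ≤ (k ^ ℓ : ℕ) := by exact_mod_cast hj₀
    nlinarith
  · have : (t : ℤ) + 1 ≤ (k ^ ℓ : ℕ) := by exact_mod_cast ht
    nlinarith

/-- The witness cuts out the digits `m, …, m' - 1` of `I` and `T`. -/
lemma exists_isRepetition_of_signature_eq (ha : HasStateDecomposition k σ F a) (hk : 0 < k)
    {q c δ ℓ m m' I T : ℕ} (hm' : m' ≤ ℓ) (hI : I < k ^ ℓ) (hT : T < k ^ ℓ)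
    (hsig : signature σ k q c δ m (I % k ^ m) (T % k ^ m) =
      signature σ k q c δ m' (I % k ^ m') (T % k ^ m'))
    (h : IsRepetition a q c δ I T) :
    ∃ I' T', I' < k ^ (m + (ℓ - m')) ∧ T' < k ^ (m + (ℓ - m')) ∧ IsRepetition a q c δ I' T' := by
  have hsplit : k ^ ℓ = k ^ m' * k ^ (ℓ - m') := by rw [← pow_add, Nat.add_sub_cancel' hm']
  rw [pow_add]
  refine ⟨I % k ^ m + k ^ m * (I / k ^ m'), T % k ^ m + k ^ m * (T / k ^ m'),
    mod_add_mul_div_lt (Nat.pow_pos hk) (hsplit ▸ hI),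
    mod_add_mul_div_lt (Nat.pow_pos hk) (hsplit ▸ hT), ?_⟩
  rw [isRepetition_iff_of_signature_eq ha hk hsig, Nat.mod_add_div, Nat.mod_add_div]
  exact h

theorem exists_isRepetition_lt_pow_signatureCount (ha : HasStateDecomposition k σ F a)
    (hk : 1 < k) (hσ : ∀ ℓ u, σ ℓ u ≤ B) {q c δ I T : ℕ} (h : IsRepetition a q c δ I T) :
    ∃ I' < k ^ signatureCount q c δ B, ∃ T' < k ^ signatureCount q c δ B,
      IsRepetition a q c δ I' T' := by
  set N := signatureCount q c δ B
  suffices ∀ ℓ I T, I < k ^ ℓ → T < k ^ ℓ → IsRepetition a q c δ I T →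
      ∃ I' < k ^ N, ∃ T' < k ^ N, IsRepetition a q c δ I' T' from
    this (I + T) I T ((Nat.le_add_right I T).trans_lt (Nat.lt_pow_self hk))
      ((Nat.le_add_left T I).trans_lt (Nat.lt_pow_self hk)) h
  intro ℓ
  induction ℓ using Nat.strong_induction_on with
  | _ ℓ ih =>
  intro I T hI hT h
  by_cases hℓ : ℓ ≤ N
  · have := Nat.pow_le_pow_right (by omega : 0 < k) hℓ
    exact ⟨I, by omega, T, by omega, h⟩
  have hcard : (signatureUniverse q c δ B).card < (Finset.range (ℓ + 1)).card := by
    rw [card_signatureUniverse, Finset.card_range]; omega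
  obtain ⟨m, hm, m', hm', hne, hsig⟩ := Finset.exists_ne_map_eq_of_card_lt_of_maps_to hcard
    (f := fun m => signature σ k q c δ m (I % k ^ m) (T % k ^ m))
    fun m _ => signature_mem_signatureUniverse (by omega) hσ
      (Nat.mod_lt _ (Nat.pow_pos (by omega))) (Nat.mod_lt _ (Nat.pow_pos (by omega)))
  wlog hlt : m < m' generalizing m m'
  · exact this m' hm' m hm hne.symm hsig.symm (by omega)
  simp only [Finset.mem_range] at hm hm'
  obtain ⟨I', T', hI', hT', h'⟩ :=
    exists_isRepetition_of_signature_eq ha (by omega) (by omega) hI hT hsig h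
  exact ih _ (by omega) I' T' hI' hT' h'

end Pumping

/-- The cut-off `j ≤ c * T` loses nothing once `1 ≤ q`. -/
def RepetitionBelow (b : ℕ → ℕ) (q c δ M : ℕ) : Prop :=
  ∃ I < M, ∃ T < M, 1 ≤ T ∧ ∀ j < c * T + 1, q * j + δ ≤ c * T → b (I + j) = b (I + T + j)

instance (b : ℕ → ℕ) (q c δ M : ℕ) : Decidable (RepetitionBelow b q c δ M) := by
  unfold RepetitionBelow; infer_instance

lemma repetitionBelow_iff {b : ℕ → ℕ} {q c δ M : ℕ} (hq : 1 ≤ q) :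
    RepetitionBelow b q c δ M ↔ ∃ I < M, ∃ T < M, IsRepetition b q c δ I T := by
  unfold RepetitionBelow IsRepetition
  refine exists_congr fun I => and_congr_right fun _ => exists_congr fun T =>
    and_congr_right fun _ => and_congr_right fun _ => ?_
  exact ⟨fun h j hj => h j (by nlinarith) hj, fun h j _ => h j⟩

/-- `(k, transition table, initial state, output table, p, q)` -/
abbrev DfaoInput : Type := ℕ × List (List ℕ) × ℕ × List ℕ × ℕ × ℕ

def avoidsRepetitions (δ : ℕ) : DfaoInput → Bool
  | (k, table, q0, out, p, q) =>
    !decide (RepetitionBelow (dfaoEval k table q0 out) q (p - q) δ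
      (k ^ signatureCount q (p - q) δ (q0 + table.flatten.sum)))

theorem avoidsRepetitions_eq_true_iff {δ k : ℕ} {trans : List (List ℕ)} {q0 : ℕ} {out : List ℕ}
    {a : ℕ → ℕ} {p q : ℕ} (hk : 2 ≤ k) (ha : dfaoGenerates k trans q0 out a) (hq : 1 ≤ q) :
    avoidsRepetitions δ (k, trans, q0, out, p, q) = true ↔
      ¬ ∃ I T, IsRepetition a q (p - q) δ I T := by
  rw [avoidsRepetitions, Bool.not_eq_true', decide_eq_false_iff_not,
    ← eq_dfaoEval_of_dfaoGenerates hk ha, repetitionBelow_iff hq]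
  refine not_congr ⟨fun ⟨I, _, T, _, h⟩ => ⟨I, T, h⟩, fun ⟨_, _, h⟩ => ?_⟩
  exact exists_isRepetition_lt_pow_signatureCount (hasStateDecomposition_of_dfaoGenerates hk ha)
    (by omega) (fun _ _ => dfaoRun_le _ _ _) h

section Computability

open Primrec

variable {α : Type*} [Primcodable α]

lemma primrec_nat_pow : Primrec₂ ((· ^ ·) : ℕ → ℕ → ℕ) :=
  Primrec₂.unpaired'.1 Nat.Primrec.pow

lemma primrecRel_exists_lt {R : ℕ → α → Prop} (hR : PrimrecRel R) :
    PrimrecRel fun n y => ∃ x < n, R x y :=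
  (hR.exists_mem_list.comp (list_range.comp fst) snd).of_eq (by simp)

lemma primrecRel_forall_lt {R : ℕ → α → Prop} (hR : PrimrecRel R) :
    PrimrecRel fun n y => ∀ x < n, R x y :=
  (hR.forall_mem_list.comp (list_range.comp fst) snd).of_eq (by simp)

lemma primrec_lowDigits {k ℓ u : α → ℕ} (hk : Primrec k) (hℓ : Primrec ℓ) (hu : Primrec u) :
    Primrec fun x => lowDigits (k x) (ℓ x) (u x) :=
  list_map (list_range.comp hℓ)
    (nat_mod.comp (nat_div.comp (hu.comp fst) (primrec_nat_pow.comp (hk.comp fst) snd))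
      (hk.comp fst)).to₂

lemma primrec_dfaoRun {trans : α → List (List ℕ)} {q : α → ℕ} {w : α → List ℕ}
    (htrans : Primrec trans) (hq : Primrec q) (hw : Primrec w) :
    Primrec fun x => dfaoRun (trans x) (q x) (w x) :=
  (list_foldl hw hq ((list_getD 0).comp ((list_getD []).comp (htrans.comp fst) (fst.comp snd))
    (snd.comp snd)).to₂).of_eq fun x => (dfaoRun_eq_foldl (trans x) (q x) (w x)).symm

lemma primrec_dfaoEval {k q0 n : α → ℕ} {trans : α → List (List ℕ)} {out : α → List ℕ}
    (hk : Primrec k) (htrans : Primrec trans) (hq0 : Primrec q0) (hout : Primrec out)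
    (hn : Primrec n) : Primrec fun x => dfaoEval (k x) (trans x) (q0 x) (out x) (n x) :=
  (list_getD 0).comp hout (primrec_dfaoRun htrans hq0 (primrec_lowDigits hk hn hn))

lemma primrecPred_repetitionBelow {b : α → ℕ → ℕ} {q c δ M : α → ℕ} (hb : Primrec₂ b)
    (hq : Primrec q) (hc : Primrec c) (hδ : Primrec δ) (hM : Primrec M) :
    PrimrecPred fun x => RepetitionBelow (b x) (q x) (c x) (δ x) (M x) := by
  have hwindow : PrimrecRel fun (j : ℕ) (y : α × ℕ × ℕ) =>
      q y.1 * j + δ y.1 ≤ c y.1 * y.2.2 → b y.1 (y.2.1 + j) = b y.1 (y.2.1 + y.2.2 + j) := by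
    refine (PrimrecPred.or (PrimrecPred.not (nat_le.comp ?_ ?_)) (Primrec.eq.comp ?_ ?_)).of_eq
      fun _ => imp_iff_not_or.symm
    · exact nat_add.comp (nat_mul.comp (hq.comp (fst.comp snd)) fst) (hδ.comp (fst.comp snd))
    · exact nat_mul.comp (hc.comp (fst.comp snd)) (snd.comp (snd.comp snd))
    · exact hb.comp (fst.comp snd) (nat_add.comp (fst.comp (snd.comp snd)) fst)
    · exact hb.comp (fst.comp snd) (nat_add.comp (nat_add.comp (fst.comp (snd.comp snd))
        (snd.comp (snd.comp snd))) fst)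
  have hperiod : PrimrecRel fun (T : ℕ) (y : α × ℕ) =>
      1 ≤ T ∧ ∀ j < c y.1 * T + 1, q y.1 * j + δ y.1 ≤ c y.1 * T →
        b y.1 (y.2 + j) = b y.1 (y.2 + T + j) := by
    have hall := (primrecRel_forall_lt hwindow).comp
      (nat_add.comp (nat_mul.comp (hc.comp (fst.comp snd)) fst) (const 1))
      (pair (fst.comp snd) (pair (snd.comp snd) fst))
    exact PrimrecPred.and (nat_le.comp (const 1) fst) hall
  have hstart : PrimrecRel fun (I : ℕ) (x : α) => ∃ T < M x, 1 ≤ T ∧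
      ∀ j < c x * T + 1, q x * j + δ x ≤ c x * T → b x (I + j) = b x (I + T + j) :=
    (primrecRel_exists_lt hperiod).comp (hM.comp snd) (pair snd fst)
  exact (primrecRel_exists_lt hstart).comp hM Primrec.id

lemma primrec_signatureCount {q c δ B : α → ℕ} (hq : Primrec q) (hc : Primrec c)
    (hδ : Primrec δ) (hB : Primrec B) :
    Primrec fun x => signatureCount (q x) (c x) (δ x) (B x) := by
  have hB1 := nat_add.comp hB (const 1)
  exact nat_mul.comp (const 2) (primrec_nat_pow.comp (const 2)
    (nat_mul.comp (nat_add.comp (nat_add.comp (nat_add.comp hq hδ) hc) (const 1))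
      (nat_mul.comp hB1 (nat_mul.comp (const 2) (nat_mul.comp hB1 (const 3))))))

lemma primrec_sum_flatten : Primrec fun l : List (List ℕ) => l.flatten.sum :=
  (list_foldr list_flatten (const 0) (nat_add.comp (fst.comp snd) (snd.comp snd)).to₂).of_eq
    fun _ => rfl

theorem primrec_avoidsRepetitions (δ : ℕ) : Primrec (avoidsRepetitions δ) := by
  have hk : Primrec fun x : DfaoInput => x.1 := fst
  have htable : Primrec fun x : DfaoInput => x.2.1 := fst.comp snd
  have hq0 : Primrec fun x : DfaoInput => x.2.2.1 :=
    fst.comp (snd.comp snd)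
  have hout : Primrec fun x : DfaoInput => x.2.2.2.1 :=
    fst.comp (snd.comp (snd.comp snd))
  have hp : Primrec fun x : DfaoInput => x.2.2.2.2.1 :=
    fst.comp (snd.comp (snd.comp (snd.comp snd)))
  have hq : Primrec fun x : DfaoInput => x.2.2.2.2.2 :=
    snd.comp (snd.comp (snd.comp (snd.comp snd)))
  have hc := nat_sub.comp hp hq
  have hb : Primrec₂ fun (x : DfaoInput) n =>
      dfaoEval x.1 x.2.1 x.2.2.1 x.2.2.2.1 n :=
    primrec_dfaoEval (hk.comp fst) (htable.comp fst) (hq0.comp fst) (hout.comp fst) snd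
  have hM := primrec_nat_pow.comp hk (primrec_signatureCount hq hc (const δ)
    (nat_add.comp hq0 (primrec_sum_flatten.comp htable)))
  refine (primrecPred_repetitionBelow hb hq hc (const δ) hM).not.decide.of_eq ?_
  rintro ⟨k, table, q0, out, p, q⟩
  simp [avoidsRepetitions]

end Computability

end AutomaticRepetition

open AutomaticRepetition

/-- It is decidable, given `k ≥ 2`, a DFAO generating a `k`-automatic sequence
`a`, and a rational `r = p/q > 1` (with `1 ≤ q < p`), whether `a` avoids
`r`-powers; and likewise whether `a` avoids `r⁺`-powers. -/
theorem avoidsRPowers_decidable :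
    ∃ f g : ℕ × List (List ℕ) × ℕ × List ℕ × ℕ × ℕ → Bool,
      Computable f ∧ Computable g ∧
      ∀ (k : ℕ) (trans : List (List ℕ)) (q0 : ℕ) (out : List ℕ) (a : ℕ → ℕ)
        (p q : ℕ),
        2 ≤ k → dfaoGenerates k trans q0 out a → 1 ≤ q → q < p →
        ((f (k, trans, q0, out, p, q) = true ↔
            ∀ w : List ℕ, IsFactorOf a w → ¬ IsRPower p q w) ∧
         (g (k, trans, q0, out, p, q) = true ↔
            ∀ w : List ℕ, IsFactorOf a w → ¬ IsRPlusPower p q w)) := by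
  refine ⟨avoidsRepetitions 1, avoidsRepetitions 0, (primrec_avoidsRepetitions 1).to_comp,
    (primrec_avoidsRepetitions 0).to_comp, fun k trans q0 out a p q hk ha hq hpq => ⟨?_, ?_⟩⟩
  · rw [avoidsRepetitions_eq_true_iff hk ha hq, ← exists_isPowerOf_factor_iff hq hpq hq]
    simp [IsRPower, isRPowerOf_iff]
  · rw [avoidsRepetitions_eq_true_iff hk ha hq,
      ← exists_isPowerOf_factor_iff hq hpq (Nat.zero_le q)]
    simp [IsRPlusPower, isRPlusPowerOf_iff]
end

section
/- There is an algorithm that, given an integer k ≥ 2, a DFAO M generating a k-automatic sequence a = (a_n)_{n≥0}, and a rational number r > 1, decides whether a contains infinitely many distinct r-power factors (i.e., whether the set of factors of a that are r-powers is infinite); similarly for r^+-powers. -/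
/-!
Write `r = p/q`. The factor of `a` at `i` of length `⌈r T⌉` is an `r`-power of period `T` exactly
when `a (i + j) = a (i + j + T)` for all `j` with `q (j + T) < p T` (with `≤` for `r⁺`-powers).
Since `a` takes finitely many values, there are infinitely many `r`-power factors iff this window
condition holds for arbitrarily large `T`.

The pairs `(T, i)` violating the condition, written in base `k` least significant digit first,
are recognised by a nondeterministic automaton that guesses the offending position `m` digit by
digit and tracks `i ≤ m`, the linear inequality, the DFAO on `m`, and the DFAO on `m + T` through
an adder. Its subset automaton has at most `B = 2 ^ #states` states. A pair satisfying the
condition with `T ≥ k ^ B` has a nonzero digit of `T` beyond position `B`, so it can be pumped up,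
through a loop before that digit, to arbitrarily large `T`, and pumped down to a pair with
`T, i < k ^ (3 B)`. Hence infinitude is equivalent to a bounded search, which is primitive
recursive.
-/

theorem Nat.ofDigits_map_range_div_pow_mod (k n m : ℕ) :
    Nat.ofDigits k ((List.range n).map fun j => m / k ^ j % k) = m % k ^ n := by
  induction n generalizing m with
  | zero => simp [Nat.mod_one]
  | succ n ih =>
    rw [List.range_succ_eq_map, List.map_cons, List.map_map, Nat.ofDigits_cons, pow_succ',
      Nat.mod_mul, ← ih (m / k)]
    simp [Function.comp_def, pow_succ', Nat.div_div_eq_div_mul]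

theorem Nat.add_mul_lt_add_mul_iff {k a b X Y : ℕ} (ha : a < k) (hb : b < k) :
    a + k * X < b + k * Y ↔ X < Y ∨ X = Y ∧ a < b := by
  rcases lt_trichotomy X Y with h | rfl | h
  · have := Nat.mul_le_mul_left k (Nat.succ_le_of_lt h)
    rw [Nat.mul_succ] at this
    omega
  · omega
  · have := Nat.mul_le_mul_left k (Nat.succ_le_of_lt h)
    rw [Nat.mul_succ] at this
    omega

theorem Nat.add_mul_eq_add_mul_iff {k a b X Y : ℕ} (ha : a < k) (hb : b < k) :
    a + k * X = b + k * Y ↔ X = Y ∧ a = b := by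
  have h1 := Nat.add_mul_lt_add_mul_iff (X := X) (Y := Y) ha hb
  have h2 := Nat.add_mul_lt_add_mul_iff (X := Y) (Y := X) hb ha
  omega

theorem Nat.add_pred_div_add_le_iff {k : ℕ} (hk : 0 < k) (Y D C : ℕ) :
    (Y + (k - 1)) / k + D ≤ C ↔ Y + k * D ≤ k * C := by
  rw [← Nat.add_mul_div_left _ _ hk, show Y + (k - 1) + k * D = Y + k * D + (k - 1) by ring,
    Nat.div_le_iff_le_mul_add_pred hk]
  omega

def ofDigitsFin (k : ℕ) (w : List (Fin k)) : ℕ := Nat.ofDigits k (w.map (↑))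

@[simp]
theorem ofDigitsFin_nil (k : ℕ) : ofDigitsFin k [] = 0 := rfl

theorem ofDigitsFin_cons (k : ℕ) (d : Fin k) (w : List (Fin k)) :
    ofDigitsFin k (d :: w) = d + k * ofDigitsFin k w := by
  simp [ofDigitsFin, Nat.ofDigits_cons]

theorem ofDigitsFin_lt (k : ℕ) (w : List (Fin k)) : ofDigitsFin k w < k ^ w.length := by
  induction w with
  | nil => simp
  | cons d w ih =>
    rw [ofDigitsFin_cons, List.length_cons, pow_succ']
    calc (d : ℕ) + k * ofDigitsFin k w < k * (ofDigitsFin k w + 1) := by rw [Nat.mul_succ]; omega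
      _ ≤ k * k ^ w.length := Nat.mul_le_mul_left k ih

theorem pow_le_ofDigitsFin_map_iff {α : Type*} {k : ℕ} (hk : 0 < k) (f : α → Fin k) :
    ∀ (u : List α) (B : ℕ), k ^ B ≤ ofDigitsFin k (u.map f) ↔
      ∃ x l y, u = x ++ l :: y ∧ B ≤ x.length ∧ (f l : ℕ) ≠ 0
  | [], B => by simp; omega
  | l :: u, 0 => by
    have ih := pow_le_ofDigitsFin_map_iff hk f u 0
    simp only [pow_zero, zero_le, true_and] at ih ⊢
    rw [List.map_cons, ofDigitsFin_cons]
    constructor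
    · intro h
      by_cases hl : (f l : ℕ) = 0
      · obtain ⟨x, l', y, rfl, hl'⟩ := ih.1 (Nat.one_le_iff_ne_zero.2 fun h0 => by simp_all)
        exact ⟨l :: x, l', y, rfl, hl'⟩
      · exact ⟨[], l, u, rfl, hl⟩
    · rintro ⟨_ | ⟨l0, x⟩, l', y, hxy, hl'⟩ <;> injection hxy with h1 h2
      · subst h1; omega
      · have := Nat.mul_pos hk (ih.2 ⟨x, l', y, h2, hl'⟩)
        omega
  | l :: u, B + 1 => by
    have ih := pow_le_ofDigitsFin_map_iff hk f u B
    have key := Nat.add_mul_lt_add_mul_iff (a := f l) (b := 0)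
      (X := ofDigitsFin k (u.map f)) (Y := k ^ B) (f l).isLt hk
    rw [List.map_cons, ofDigitsFin_cons, pow_succ']
    constructor
    · intro h
      obtain ⟨x, l', y, rfl, hB, hl'⟩ := ih.1 (by omega)
      exact ⟨l :: x, l', y, rfl, by simpa using hB, hl'⟩
    · rintro ⟨_ | ⟨l0, x⟩, l', y, hxy, hB, hl'⟩
      · simp at hB
      · injection hxy with h1 h2
        have := ih.2 ⟨x, l', y, h2, by simpa using hB, hl'⟩
        omega

def finDigits (k : ℕ) [NeZero k] (n m : ℕ) : List (Fin k) :=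
  (List.range n).map fun j => Fin.ofNat k (m / k ^ j)

@[simp]
theorem length_finDigits (k : ℕ) [NeZero k] (n m : ℕ) : (finDigits k n m).length = n := by
  simp [finDigits]

theorem ofDigitsFin_finDigits (k : ℕ) [NeZero k] (n m : ℕ) :
    ofDigitsFin k (finDigits k n m) = m % k ^ n := by
  rw [ofDigitsFin, finDigits, List.map_map, ← Nat.ofDigits_map_range_div_pow_mod]
  simp [Function.comp_def]

theorem ofDigitsFin_map_append_replicate_zero {α : Type*} {k : ℕ} [NeZero k] (f : α → Fin k)
    {z : α} (hz : f z = 0) (u : List α) (n : ℕ) :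
    ofDigitsFin k ((u ++ List.replicate n z).map f) = ofDigitsFin k (u.map f) := by
  simp [ofDigitsFin, hz, Nat.ofDigits_append_replicate_zero]

theorem exists_word_of_pow_le {k : ℕ} [NeZero k] (hk : 2 ≤ k) {B T : ℕ} (i : ℕ) (hT : k ^ B ≤ T) :
    ∃ (x : List (Fin k × Fin k)) (l : Fin k × Fin k) (y : List (Fin k × Fin k)),
      B ≤ x.length ∧ (l.1 : ℕ) ≠ 0 ∧ ofDigitsFin k ((x ++ l :: y).map Prod.fst) = T ∧
        ofDigitsFin k ((x ++ l :: y).map Prod.snd) = i := by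
  have hTn : T < k ^ (T + i) :=
    (Nat.lt_pow_self (by omega)).trans_le (Nat.pow_le_pow_right (by omega) (by omega))
  have hin : i < k ^ (T + i) :=
    (Nat.lt_pow_self (by omega)).trans_le (Nat.pow_le_pow_right (by omega) (by omega))
  set u := (finDigits k (T + i) T).zip (finDigits k (T + i) i)
  have hTu : ofDigitsFin k (u.map Prod.fst) = T := by
    rw [List.map_fst_zip (by simp), ofDigitsFin_finDigits, Nat.mod_eq_of_lt hTn]
  have hIu : ofDigitsFin k (u.map Prod.snd) = i := by
    rw [List.map_snd_zip (by simp), ofDigitsFin_finDigits, Nat.mod_eq_of_lt hin]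
  obtain ⟨x, l, y, hu, hBx, hl⟩ := (pow_le_ofDigitsFin_map_iff (by omega) Prod.fst u B).1 (hTu ▸ hT)
  exact ⟨x, l, y, hBx, hl, hu ▸ hTu, hu ▸ hIu⟩

theorem lt_pow_of_mul_le {k p q T I m n : ℕ} (hk : 2 ≤ k) (hq : 1 ≤ q) (hqp : q ≤ p)
    (hT : T < k ^ n) (hI : I < k ^ n) (h : q * m ≤ (p - q) * T + q * I + p) :
    m < k ^ (n + (p + 1)) := by
  obtain ⟨K, hK⟩ : ∃ K, k ^ n = K + 1 :=
    ⟨k ^ n - 1, by have := Nat.one_le_pow n k (by omega); omega⟩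
  rw [hK] at hT hI
  have e1 : (p - q) * T ≤ (p - q) * K := Nat.mul_le_mul_left _ (by omega)
  have e2 : q * I ≤ q * K := Nat.mul_le_mul_left _ (by omega)
  have e3 : (p - q) * K + q * K = p * K := by rw [← Nat.add_mul, Nat.sub_add_cancel hqp]
  have e4 : m ≤ q * m := Nat.le_mul_of_pos_left m hq
  have hp : p < k ^ (p + 1) :=
    (Nat.lt_pow_self (by omega)).trans (Nat.pow_lt_pow_right (by omega) (by omega))
  calc m ≤ p * (K + 1) := by rw [Nat.mul_succ]; omega
    _ < k ^ (p + 1) * (K + 1) := Nat.mul_lt_mul_of_pos_right hp (by omega)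
    _ = k ^ (n + (p + 1)) := by rw [← hK, ← pow_add, Nat.add_comm]

namespace NFA

variable {α σ : Type*} (M : NFA α σ)

theorem evalFrom_append_flatten_replicate_append {S : Set σ} {x y : List α}
    (h : M.evalFrom S (x ++ y) = M.evalFrom S x) (n : ℕ) (z : List α) :
    M.evalFrom S (x ++ (List.replicate n y).flatten ++ z) = M.evalFrom S (x ++ z) := by
  induction n with
  | zero => simp
  | succ n ih =>
    rw [List.replicate_succ, List.flatten_cons, ← List.append_assoc, List.append_assoc,
      evalFrom_append, h, ← evalFrom_append, ← List.append_assoc, ih]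

theorem evalFrom_subset {F : Set σ} (hF : ∀ s ∈ F, ∀ a, M.step s a ⊆ F) {S : Set σ}
    (hS : S ⊆ F) (w : List α) : M.evalFrom S w ⊆ F := by
  induction w generalizing S with
  | nil => exact hS
  | cons a w ih =>
    refine ih fun s hs => ?_
    obtain ⟨t, ht, hst⟩ := mem_stepSet.1 hs
    exact hF t (hS ht) a hst

theorem exists_evalFrom_take_eq_take {F : Finset σ} (hF : ∀ s ∈ F, ∀ a, M.step s a ⊆ F)
    {S : Set σ} (hS : S ⊆ F) (w : List α) :
    ∃ c d, c < d ∧ d ≤ 2 ^ F.card ∧ M.evalFrom S (w.take c) = M.evalFrom S (w.take d) := by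
  have hcard : (𝒫 (F : Set σ)).ncard < (↑(Finset.range (2 ^ F.card + 1)) : Set ℕ).ncard := by
    rw [Set.ncard_powerset _ F.finite_toSet, Set.ncard_coe_finset, Set.ncard_coe_finset,
      Finset.card_range]
    omega
  obtain ⟨c, hc, d, hd, hne, heq⟩ := Set.exists_ne_map_eq_of_ncard_lt_of_maps_to hcard
    (f := fun j => M.evalFrom S (w.take j)) (fun j _ => M.evalFrom_subset hF hS _)
    F.finite_toSet.powerset
  simp only [Finset.coe_range, Set.mem_Iio] at hc hd
  rcases Nat.lt_or_gt_of_ne hne with h | h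
  · exact ⟨c, d, h, by omega, heq⟩
  · exact ⟨d, c, h, by omega, heq.symm⟩

theorem exists_length_lt_evalFrom_eq {F : Finset σ} (hF : ∀ s ∈ F, ∀ a, M.step s a ⊆ F)
    {S : Set σ} (hS : S ⊆ F) (w : List α) :
    ∃ w', w'.length < 2 ^ F.card ∧ M.evalFrom S w' = M.evalFrom S w := by
  induction hn : w.length using Nat.strong_induction_on generalizing w with
  | _ n ih =>
    by_cases hw : w.length < 2 ^ F.card
    · exact ⟨w, hw, rfl⟩
    obtain ⟨c, d, hcd, hd, heq⟩ := M.exists_evalFrom_take_eq_take hF hS w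
    obtain ⟨w', hw', heq'⟩ := ih _ (by simp; omega) (w.take c ++ w.drop d) rfl
    refine ⟨w', hw', ?_⟩
    rw [heq', evalFrom_append, heq, ← evalFrom_append, List.take_append_drop]

theorem append_mem_accepts_iff_of_eval_eq {x y : List α}
    (h : M.eval x = M.eval y) (z : List α) : x ++ z ∈ M.accepts ↔ y ++ z ∈ M.accepts := by
  unfold NFA.eval at h
  rw [NFA.mem_accepts, NFA.mem_accepts, NFA.evalFrom_append, NFA.evalFrom_append, h]

end NFA

theorem Set.infinite_iff_exists_length_ge {α : Type*} {A : Set α} (hA : A.Finite)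
    {S : Set (List α)} (hS : ∀ w ∈ S, ∀ x ∈ w, x ∈ A) :
    S.Infinite ↔ ∀ n, ∃ w ∈ S, n ≤ w.length := by
  constructor
  · intro hinf n
    by_contra! hshort
    have := hA.to_subtype
    refine hinf (((List.finite_length_le A n).image (List.map Subtype.val)).subset ?_)
    intro w hw
    exact ⟨w.attachWith (· ∈ A) (hS w hw), by simpa using (hshort w hw).le, by simp⟩
  · intro hlong hfin
    obtain ⟨n, hn⟩ := (hfin.image List.length).bddAbove
    obtain ⟨w, hw, hlen⟩ := hlong (n + 1)
    have := hn ⟨w, hw, rfl⟩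
    omega

theorem dfaoGenerates.finite_range {k : ℕ} {trans : List (List ℕ)} {q0 : ℕ} {out : List ℕ}
    {a : ℕ → ℕ} (hk : 2 ≤ k) (hgen : dfaoGenerates k trans q0 out a) :
    (Set.range a).Finite := by
  refine (0 :: out).finite_toSet.subset ?_
  rintro _ ⟨m, rfl⟩
  rw [hgen m (Nat.digits k m) (fun d hd => Nat.digits_lt_base hk hd) (Nat.ofDigits_digits k m)]
  show _ ∈ 0 :: out
  rcases lt_or_ge (dfaoRun trans q0 (Nat.digits k m)) out.length with h | h
  · rw [List.getD_eq_getElem _ _ h]; exact List.mem_cons_of_mem _ (List.getElem_mem h)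
  · rw [List.getD_eq_default _ _ h]; exact List.mem_cons_self

-- `e = 1` gives the `p/q`-powers and `e = 0` the `(p/q)⁺`-powers: the length `L` is the largest
-- one with `q (L - 1) + e ≤ p T`.
def IsPowerWithSlack (p q e T : ℕ) (z : List ℕ) : Prop :=
  1 ≤ T ∧ T ≤ z.length ∧ (∀ j : ℕ, j + T < z.length → z.getD j 0 = z.getD (j + T) 0) ∧
    q * (z.length - 1) + e ≤ p * T ∧ p * T < q * z.length + e

theorem isRPower_iff {p q : ℕ} {z : List ℕ} : IsRPower p q z ↔ ∃ T, IsPowerWithSlack p q 1 T z := by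
  simp only [IsRPower, IsRPowerOf, IsPowerWithSlack]
  refine exists_congr fun T => ?_
  constructor <;> rintro ⟨h1, h2, h3, h4, h5⟩ <;> exact ⟨h1, h2, h3, by omega, by omega⟩

theorem isRPlusPower_iff {p q : ℕ} {z : List ℕ} :
    IsRPlusPower p q z ↔ ∃ T, IsPowerWithSlack p q 0 T z := by
  simp only [IsRPlusPower, IsRPlusPowerOf, IsPowerWithSlack]
  refine exists_congr fun T => ?_
  constructor <;> rintro ⟨h1, h2, h3, h4, h5⟩ <;> exact ⟨h1, h2, h3, by omega, by omega⟩

/-- The factor of `a` at `i` of the length prescribed by `IsPowerWithSlack` has period `T`. -/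
def IsPeriodicWindow (a : ℕ → ℕ) (p q e i T : ℕ) : Prop :=
  ∀ j, q * (j + T) + e ≤ p * T → a (i + j) = a (i + j + T)

theorem factorAt_getD (a : ℕ → ℕ) (i L j : ℕ) (h : j < L) :
    (factorAt a i L).getD j 0 = a (i + j) := by
  simp [factorAt, List.getElem?_range h]

@[simp]
theorem length_factorAt (a : ℕ → ℕ) (i L : ℕ) : (factorAt a i L).length = L := by
  simp [factorAt]

section Window

variable {a : ℕ → ℕ} {p q e : ℕ}

theorem lt_length_iff_of_slack {T L : ℕ} (hL : q * (L - 1) + e ≤ p * T ∧ p * T < q * L + e)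
    (j : ℕ) : j + T < L ↔ q * (j + T) + e ≤ p * T := by
  constructor
  · intro h
    have := Nat.mul_le_mul_left q (show j + T ≤ L - 1 by omega)
    omega
  · intro h
    exact Nat.lt_of_mul_lt_mul_left (a := q) (by omega)

theorem IsPowerWithSlack.isPeriodicWindow {T i : ℕ} {z : List ℕ}
    (hz : z = factorAt a i z.length) (h : IsPowerWithSlack p q e T z) :
    IsPeriodicWindow a p q e i T := by
  obtain ⟨-, -, hper, hL⟩ := h
  intro j hj
  have hjT := (lt_length_iff_of_slack hL j).2 hj
  have := hper j hjT
  rwa [hz, factorAt_getD a i _ j (by omega), factorAt_getD a i _ (j + T) hjT,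
    ← Nat.add_assoc] at this

theorem IsPeriodicWindow.exists_isPowerWithSlack_factorAt (hq : 1 ≤ q) (hqp : q < p)
    (he : e ≤ 1) {T i : ℕ} (hT : 1 ≤ T) (h : IsPeriodicWindow a p q e i T) :
    ∃ L, IsPowerWithSlack p q e T (factorAt a i L) := by
  have hqT : q * T < p * T := Nat.mul_lt_mul_of_pos_right hqp (by omega)
  have hdiv : q * ((p * T - e) / q) ≤ p * T - e := Nat.mul_div_le _ _
  have hdiv' : p * T - e < q * ((p * T - e) / q + 1) := Nat.lt_mul_div_succ _ (by omega)
  obtain ⟨L, hL⟩ : ∃ L, q * (L - 1) + e ≤ p * T ∧ p * T < q * L + e :=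
    ⟨(p * T - e) / q + 1, by simp only [Nat.add_sub_cancel]; omega, by omega⟩
  have hTL : T < L := by
    have := (lt_length_iff_of_slack hL 0).2 (by rw [Nat.zero_add]; omega)
    omega
  refine ⟨L, ?_⟩
  simp only [IsPowerWithSlack, length_factorAt]
  refine ⟨hT, hTL.le, fun j hj => ?_, hL⟩
  rw [factorAt_getD a i L j (by omega), factorAt_getD a i L (j + T) hj, ← Nat.add_assoc]
  exact h j ((lt_length_iff_of_slack hL j).1 hj)

theorem setOf_isPowerWithSlack_factor_infinite_iff (ha : (Set.range a).Finite) (hq : 1 ≤ q)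
    (hqp : q < p) (he : e ≤ 1) :
    {w | IsFactorOf a w ∧ ∃ T, IsPowerWithSlack p q e T w}.Infinite ↔
      ∀ N, ∃ T i, N ≤ T ∧ IsPeriodicWindow a p q e i T := by
  rw [Set.infinite_iff_exists_length_ge ha]
  · constructor
    · intro hlong N
      obtain ⟨w, ⟨⟨i, hw⟩, T, hpow⟩, hlen⟩ := hlong (p * N + 2)
      refine ⟨T, i, ?_, hpow.isPeriodicWindow hw⟩
      have h1 := hpow.2.2.2.1
      have h2 := Nat.le_mul_of_pos_left (w.length - 1) hq
      exact (Nat.lt_of_mul_lt_mul_left (a := p) (by omega)).le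
    · intro hT n
      obtain ⟨T, i, hnT, hwin⟩ := hT (n + 1)
      obtain ⟨L, hpow⟩ := hwin.exists_isPowerWithSlack_factorAt hq hqp he (by omega)
      exact ⟨_, ⟨⟨i, by rw [length_factorAt]⟩, T, hpow⟩, by have := hpow.2.1; omega⟩
  · rintro w ⟨⟨i, hw⟩, -⟩ x hx
    rw [hw] at hx
    obtain ⟨j, -, rfl⟩ := List.mem_map.1 hx
    exact ⟨i + j, rfl⟩

end Window

def dfaoStep (trans : List (List ℕ)) (s d : ℕ) : ℕ := (trans.getD s []).getD d 0

theorem dfaoRun_eq_foldl (trans : List (List ℕ)) (s : ℕ) (ds : List ℕ) :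
    dfaoRun trans s ds = ds.foldl (dfaoStep trans) s := by
  induction ds generalizing s with
  | nil => rfl
  | cons d ds ih => exact ih _

def dfaoStates (trans : List (List ℕ)) (q0 : ℕ) : Finset ℕ := (q0 :: 0 :: trans.flatten).toFinset

theorem dfaoStep_mem_dfaoStates (trans : List (List ℕ)) (q0 s d : ℕ) :
    dfaoStep trans s d ∈ dfaoStates trans q0 := by
  simp only [dfaoStates, dfaoStep, List.mem_toFinset, List.mem_cons]
  rcases lt_or_ge d (trans.getD s []).length with h | h
  · right; right
    rw [List.getD_eq_getElem _ _ h]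
    refine List.mem_flatten.2 ⟨_, ?_, List.getElem_mem h⟩
    rcases lt_or_ge s trans.length with hs | hs
    · rw [List.getD_eq_getElem _ _ hs]; exact List.getElem_mem hs
    · rw [List.getD_eq_default _ _ hs] at h; simp at h
  · right; left; exact List.getD_eq_default _ _ h

/-- A state of the automaton that reads the digits of `T`, `i` and a guessed `m`, least
significant first: whether `i ≤ m` so far, the scaled carry of the linear inequality
`s₀ + q m ≤ (p - q) T + q i + p`, the DFAO states reached on `m` and on `m + T`, and the carry
of the addition `m + T`. -/
structure WindowState where
  geq : Bool
  slack : ℕ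
  stateM : ℕ
  stateMT : ℕ
  carry : ℕ

namespace WindowState

variable (k p q : ℕ) (trans : List (List ℕ))

-- `slack` is updated by a ceiling division by `k`; the offset `p (k - 1)` bounds the subtracted
-- digit contributions, so the truncated subtraction never cuts off.
def next (s : WindowState) (dT di dm : ℕ) : WindowState where
  geq := if di = dm then s.geq else decide (di < dm)
  slack := (s.slack + q * dm + (p * (k - 1) - ((p - q) * dT + q * di)) + (k - 1)) / k
  stateM := dfaoStep trans s.stateM dm
  stateMT := dfaoStep trans s.stateMT ((dm + dT + s.carry) % k)
  carry := (dm + dT + s.carry) / k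

/-- The run on the digits `u` of `(T, i)` and `mw` of `m`. -/
def run (s : WindowState) (u : List (Fin k × Fin k)) (mw : List (Fin k)) : WindowState :=
  (u.zip mw).foldl (fun s x => s.next k p q trans x.1.1 x.1.2 x.2) s

def init (t0 q0 : ℕ) : WindowState := ⟨true, t0, q0, q0, 0⟩

variable {k p q trans}

@[simp]
theorem run_nil (s : WindowState) (mw : List (Fin k)) : s.run k p q trans [] mw = s := rfl

@[simp]
theorem run_cons (s : WindowState) (d : Fin k × Fin k) (u : List (Fin k × Fin k)) (dm : Fin k)
    (mw : List (Fin k)) :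
    s.run k p q trans (d :: u) (dm :: mw) = (s.next k p q trans d.1 d.2 dm).run k p q trans u mw :=
  rfl

theorem run_geq (s : WindowState) (u : List (Fin k × Fin k)) (mw : List (Fin k))
    (hlen : mw.length = u.length) :
    (s.run k p q trans u mw).geq = true ↔
      ofDigitsFin k (u.map Prod.snd) < ofDigitsFin k mw ∨
        ofDigitsFin k (u.map Prod.snd) = ofDigitsFin k mw ∧ s.geq = true := by
  induction u generalizing s mw with
  | nil => simp [List.length_eq_zero_iff.1 hlen]
  | cons d u ih =>
    obtain ⟨dm, mw, rfl⟩ := List.exists_cons_of_length_eq_add_one hlen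
    rw [run_cons, ih _ _ (by simpa using hlen), List.map_cons, ofDigitsFin_cons, ofDigitsFin_cons,
      Nat.add_mul_lt_add_mul_iff d.2.isLt dm.isLt, Nat.add_mul_eq_add_mul_iff d.2.isLt dm.isLt]
    simp only [next]
    by_cases h : (d.2 : ℕ) = dm <;> simp [h]

theorem run_slack_le_iff (hqp : q ≤ p) (s : WindowState) (u : List (Fin k × Fin k))
    (mw : List (Fin k)) (hlen : mw.length = u.length) :
    (s.run k p q trans u mw).slack ≤ p ↔
      s.slack + q * ofDigitsFin k mw ≤
        (p - q) * ofDigitsFin k (u.map Prod.fst) + q * ofDigitsFin k (u.map Prod.snd) + p := by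
  induction u generalizing s mw with
  | nil => simp [List.length_eq_zero_iff.1 hlen]
  | cons d u ih =>
    obtain ⟨dm, mw, rfl⟩ := List.exists_cons_of_length_eq_add_one hlen
    have hk : 0 < k := Fin.pos dm
    rw [run_cons, ih _ _ (by simpa using hlen)]
    simp only [next, List.map_cons, ofDigitsFin_cons]
    rw [Nat.add_pred_div_add_le_iff hk]
    have hdT : (p - q) * (d.1 : ℕ) ≤ (p - q) * (k - 1) := Nat.mul_le_mul_left _ (by omega)
    have hdi : q * (d.2 : ℕ) ≤ q * (k - 1) := Nat.mul_le_mul_left _ (by omega)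
    have hsplit : (p - q) * (k - 1) + q * (k - 1) = p * (k - 1) := by
      rw [← Nat.add_mul, Nat.sub_add_cancel hqp]
    have hE : (p - q) * (d.1 : ℕ) + q * d.2 ≤ p * (k - 1) := by omega
    zify [hE, hqp, hk]
    constructor <;> intro h <;> nlinarith [h]

theorem run_stateM (s : WindowState) (u : List (Fin k × Fin k)) (mw : List (Fin k))
    (hlen : mw.length = u.length) :
    (s.run k p q trans u mw).stateM = dfaoRun trans s.stateM (mw.map (↑)) := by
  induction u generalizing s mw with
  | nil => simp [List.length_eq_zero_iff.1 hlen, dfaoRun]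
  | cons d u ih =>
    obtain ⟨dm, mw, rfl⟩ := List.exists_cons_of_length_eq_add_one hlen
    rw [run_cons, ih _ _ (by simpa using hlen)]
    rfl

theorem run_stateMT (hk : 2 ≤ k) (s : WindowState) (hc : s.carry ≤ 1)
    (u : List (Fin k × Fin k)) (mw : List (Fin k)) (hlen : mw.length = u.length) :
    ∃ w : List ℕ, (∀ d ∈ w, d < k) ∧
      Nat.ofDigits k w = ofDigitsFin k (u.map Prod.fst) + ofDigitsFin k mw + s.carry ∧
      dfaoRun trans s.stateMT w = dfaoRun trans (s.run k p q trans u mw).stateMT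
        (List.replicate (s.run k p q trans u mw).carry 1) := by
  induction u generalizing s mw with
  | nil =>
    refine ⟨List.replicate s.carry 1, fun d hd => by rw [List.eq_of_mem_replicate hd]; omega,
      ?_, by simp [List.length_eq_zero_iff.1 hlen]⟩
    rcases Nat.le_one_iff_eq_zero_or_eq_one.1 hc with h | h <;>
      simp [h, List.length_eq_zero_iff.1 hlen]
  | cons d u ih =>
    obtain ⟨dm, mw, rfl⟩ := List.exists_cons_of_length_eq_add_one hlen
    have hc' : (s.next k p q trans d.1 d.2 dm).carry ≤ 1 := by
      simp only [next]
      have := d.1.isLt; have := dm.isLt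
      exact Nat.le_of_lt_succ ((Nat.div_lt_iff_lt_mul (by omega)).2 (by omega))
    obtain ⟨w, hw, hval, hrun⟩ := ih _ hc' mw (by simpa using hlen)
    refine ⟨(dm + d.1 + s.carry) % k :: w, ?_, ?_, by rw [run_cons, ← hrun]; rfl⟩
    · rintro x (_ | ⟨_, hx⟩)
      · exact Nat.mod_lt _ (by omega)
      · exact hw x hx
    · rw [Nat.ofDigits_cons, hval, List.map_cons, ofDigitsFin_cons, ofDigitsFin_cons]
      have := Nat.mod_add_div (dm + d.1 + s.carry) k
      simp only [next]
      nlinarith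

end WindowState

/-- Guessing the digits of `m`, the automaton accepts the digits of `(T, i)` when some `m`
violates the window condition. -/
def windowNFA (k p q t0 q0 : ℕ) (trans : List (List ℕ)) (out : List ℕ) :
    NFA (Fin k × Fin k) WindowState where
  step s d := Set.range fun dm : Fin k => s.next k p q trans d.1 d.2 dm
  start := {WindowState.init t0 q0}
  accept := {s | s.geq = true ∧ s.slack ≤ p ∧
    out.getD s.stateM 0 ≠ out.getD (dfaoRun trans s.stateMT (List.replicate s.carry 1)) 0}

section WindowNFA

variable {k p q t0 q0 : ℕ} {trans : List (List ℕ)} {out : List ℕ} {a : ℕ → ℕ}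

theorem windowNFA_step (s : WindowState) (d : Fin k × Fin k) :
    (windowNFA k p q t0 q0 trans out).step s d =
      Set.range fun dm : Fin k => s.next k p q trans d.1 d.2 dm :=
  rfl

theorem mem_windowNFA_evalFrom_singleton_iff (s s' : WindowState) (u : List (Fin k × Fin k)) :
    s' ∈ (windowNFA k p q t0 q0 trans out).evalFrom {s} u ↔
      ∃ mw : List (Fin k), mw.length = u.length ∧ s.run k p q trans u mw = s' := by
  induction u generalizing s with
  | nil =>
    simp only [NFA.evalFrom_nil, Set.mem_singleton_iff, List.length_nil,
      List.length_eq_zero_iff, WindowState.run_nil, exists_eq_left]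
    exact eq_comm
  | cons d u ih =>
    rw [NFA.evalFrom_cons, NFA.stepSet_singleton, NFA.mem_evalFrom_iff_exists, windowNFA_step,
      Set.exists_range_iff]
    simp only [ih]
    constructor
    · rintro ⟨dm, mw, hlen, hrun⟩
      exact ⟨dm :: mw, by simpa using hlen, hrun⟩
    · rintro ⟨mw, hlen, hrun⟩
      obtain ⟨dm, mw, rfl⟩ := List.exists_cons_of_length_eq_add_one hlen
      exact ⟨dm, mw, by simpa using hlen, hrun⟩

theorem run_init_mem_windowNFA_accept_iff (hk : 2 ≤ k) (hqp : q ≤ p)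
    (hgen : dfaoGenerates k trans q0 out a) (u : List (Fin k × Fin k)) (mw : List (Fin k))
    (hlen : mw.length = u.length) :
    (WindowState.init t0 q0).run k p q trans u mw ∈ (windowNFA k p q t0 q0 trans out).accept ↔
      ofDigitsFin k (u.map Prod.snd) ≤ ofDigitsFin k mw ∧
        t0 + q * ofDigitsFin k mw ≤
          (p - q) * ofDigitsFin k (u.map Prod.fst) + q * ofDigitsFin k (u.map Prod.snd) + p ∧
        a (ofDigitsFin k mw) ≠ a (ofDigitsFin k mw + ofDigitsFin k (u.map Prod.fst)) := by
  obtain ⟨w, hw, hval, hrun⟩ := (WindowState.init t0 q0).run_stateMT (p := p) (q := q)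
    (trans := trans) hk (Nat.zero_le 1) u mw hlen
  have hM : a (ofDigitsFin k mw) = out.getD (dfaoRun trans q0 (mw.map (↑))) 0 :=
    hgen _ _ (by simp) rfl
  have hMT := hgen _ w hw hval
  simp only [windowNFA, Set.mem_ofPred_eq, WindowState.run_geq _ _ _ hlen,
    WindowState.run_slack_le_iff hqp _ _ _ hlen, WindowState.run_stateM _ _ _ hlen, ← hrun]
  simp only [WindowState.init, and_true, add_zero] at hM hMT ⊢
  rw [← hM, add_comm (ofDigitsFin k mw), ← hMT, Nat.le_iff_lt_or_eq (n := ofDigitsFin k _)]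

theorem append_replicate_zero_mem_windowNFA_accepts_iff [NeZero k] (hk : 2 ≤ k) (hq : 1 ≤ q)
    (hqp : q ≤ p) (hgen : dfaoGenerates k trans q0 out a) (u : List (Fin k × Fin k)) :
    u ++ List.replicate (p + 1) 0 ∈ (windowNFA k p q t0 q0 trans out).accepts ↔
      ∃ m, ofDigitsFin k (u.map Prod.snd) ≤ m ∧
        t0 + q * m ≤
          (p - q) * ofDigitsFin k (u.map Prod.fst) + q * ofDigitsFin k (u.map Prod.snd) + p ∧
        a m ≠ a (m + ofDigitsFin k (u.map Prod.fst)) := by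
  have hT := ofDigitsFin_map_append_replicate_zero Prod.fst (z := 0) rfl u (p + 1)
  have hI := ofDigitsFin_map_append_replicate_zero Prod.snd (z := 0) rfl u (p + 1)
  rw [NFA.mem_accepts]
  constructor
  · rintro ⟨s, hs, hmem⟩
    obtain ⟨mw, hlen, rfl⟩ := (mem_windowNFA_evalFrom_singleton_iff _ _ _).1 hmem
    rw [run_init_mem_windowNFA_accept_iff hk hqp hgen _ _ hlen, hT, hI] at hs
    exact ⟨_, hs⟩
  · rintro ⟨m, hm⟩
    -- the `p + 1` padding digits leave room for every `m` in the window
    have hlt : m < k ^ (u ++ List.replicate (p + 1) 0).length := by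
      rw [List.length_append, List.length_replicate]
      have hTu := ofDigitsFin_lt k (u.map Prod.fst)
      have hIu := ofDigitsFin_lt k (u.map Prod.snd)
      rw [List.length_map] at hTu hIu
      exact lt_pow_of_mul_le hk hq hqp hTu hIu (by omega)
    refine ⟨_, (run_init_mem_windowNFA_accept_iff hk hqp hgen _ (finDigits k _ m)
      (length_finDigits k _ m)).2 ?_, (mem_windowNFA_evalFrom_singleton_iff _ _ _).2
        ⟨_, length_finDigits k _ m, rfl⟩⟩
    rwa [ofDigitsFin_finDigits, Nat.mod_eq_of_lt (by simpa using hlt), hT, hI]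

theorem isPeriodicWindow_iff_not_mem_windowNFA_accepts [NeZero k] (hk : 2 ≤ k) (hq : 1 ≤ q)
    (hqp : q ≤ p) (hgen : dfaoGenerates k trans q0 out a) (e : ℕ) (u : List (Fin k × Fin k)) :
    IsPeriodicWindow a p q e (ofDigitsFin k (u.map Prod.snd)) (ofDigitsFin k (u.map Prod.fst)) ↔
      u ++ List.replicate (p + 1) 0 ∉ (windowNFA k p q (p + e) q0 trans out).accepts := by
  rw [append_replicate_zero_mem_windowNFA_accepts_iff hk hq hqp hgen, not_exists]
  generalize ofDigitsFin k (u.map Prod.snd) = I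
  generalize ofDigitsFin k (u.map Prod.fst) = T
  have key : ∀ j, q * (j + T) + e ≤ p * T ↔ p + e + q * (I + j) ≤ (p - q) * T + q * I + p := by
    intro j
    have := Nat.sub_mul p q T
    have := Nat.mul_le_mul_right T hqp
    rw [Nat.mul_add, Nat.mul_add]
    omega
  constructor
  · rintro h m ⟨him, hlin, hne⟩
    obtain ⟨j, rfl⟩ := Nat.exists_eq_add_of_le him
    exact hne (h j ((key j).2 hlin))
  · intro h j hj
    by_contra hne
    exact h (I + j) ⟨by omega, (key j).1 hj, hne⟩

end WindowNFA

def windowStates (p q q0 : ℕ) (trans : List (List ℕ)) : Finset WindowState :=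
  (Finset.univ ×ˢ Finset.range (p + q + 2) ×ˢ dfaoStates trans q0 ×ˢ dfaoStates trans q0 ×ˢ
    Finset.range 2).map
    ⟨fun x => ⟨x.1, x.2.1, x.2.2.1, x.2.2.2.1, x.2.2.2.2⟩, fun x y h => by
      simp only [WindowState.mk.injEq] at h
      simp [Prod.ext_iff, h]⟩

section WindowStates

variable {k p q t0 q0 : ℕ} {trans : List (List ℕ)} {out : List ℕ}

theorem mem_windowStates {s : WindowState} :
    s ∈ windowStates p q q0 trans ↔ s.slack < p + q + 2 ∧ s.stateM ∈ dfaoStates trans q0 ∧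
      s.stateMT ∈ dfaoStates trans q0 ∧ s.carry < 2 := by
  simp only [windowStates, Finset.mem_map, Finset.mem_product, Finset.mem_univ,
    Finset.mem_range, true_and]
  constructor
  · rintro ⟨x, hx, rfl⟩; exact hx
  · intro h; exact ⟨(s.geq, s.slack, s.stateM, s.stateMT, s.carry), h, rfl⟩

theorem card_windowStates_le :
    (windowStates p q q0 trans).card ≤ 4 * (p + q + 2) * (trans.flatten.length + 2) ^ 2 := by
  have hQ : (dfaoStates trans q0).card ≤ trans.flatten.length + 2 := List.toFinset_card_le _
  simp only [windowStates, Finset.card_map, Finset.card_product, Finset.card_univ,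
    Fintype.card_bool, Finset.card_range]
  calc 2 * ((p + q + 2) * ((dfaoStates trans q0).card * ((dfaoStates trans q0).card * 2)))
      ≤ 2 * ((p + q + 2) * ((trans.flatten.length + 2) * ((trans.flatten.length + 2) * 2))) := by
        gcongr
    _ = 4 * (p + q + 2) * (trans.flatten.length + 2) ^ 2 := by ring

theorem windowNFA_step_subset : ∀ s ∈ windowStates p q q0 trans, ∀ d,
    (windowNFA k p q t0 q0 trans out).step s d ⊆ windowStates p q q0 trans := by
  rintro s hs d _ ⟨dm, rfl⟩
  have := d.1.isLt; have := d.2.isLt; have := dm.isLt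
  rw [mem_windowStates] at hs
  rw [Finset.mem_coe, mem_windowStates]
  obtain ⟨hslack, -, -, hcarry⟩ := hs
  refine ⟨?_, dfaoStep_mem_dfaoStates _ _ _ _, dfaoStep_mem_dfaoStates _ _ _ _,
    (Nat.div_lt_iff_lt_mul (by omega)).2 (by omega)⟩
  show (_ + (k - 1)) / k < _
  have h1 : q * (dm : ℕ) ≤ q * (k - 1) := Nat.mul_le_mul_left _ (by omega)
  have h2 : (p + q + 2) * k = p * (k - 1) + q * (k - 1) + (k - 1) + (p + q + 1) + k := by
    obtain ⟨k', rfl⟩ : ∃ k', k = k' + 1 := ⟨k - 1, by omega⟩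
    simp only [Nat.add_sub_cancel]; ring
  rw [Nat.div_lt_iff_lt_mul (by omega)]
  omega

theorem init_mem_windowStates (ht0 : t0 ≤ p + q + 1) :
    WindowState.init t0 q0 ∈ windowStates p q q0 trans := by
  simp [mem_windowStates, WindowState.init, dfaoStates]
  omega

theorem windowNFA_start_subset (ht0 : t0 ≤ p + q + 1) :
    (windowNFA k p q t0 q0 trans out).start ⊆ windowStates p q q0 trans :=
  Set.singleton_subset_iff.2 (init_mem_windowStates ht0)

end WindowStates

/-- A bound on `2 ^ #windowStates`, the number of state sets of the subset automaton. -/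
def pumpingBound (p q : ℕ) (trans : List (List ℕ)) : ℕ :=
  2 ^ (4 * (p + q + 2) * (trans.flatten.length + 2) ^ 2)

theorem two_pow_card_windowStates_le (p q q0 : ℕ) (trans : List (List ℕ)) :
    2 ^ (windowStates p q q0 trans).card ≤ pumpingBound p q trans :=
  Nat.pow_le_pow_right (by omega) card_windowStates_le

section Pumping

variable {k p q e q0 : ℕ} {trans : List (List ℕ)} {out : List ℕ} {a : ℕ → ℕ}

theorem IsPeriodicWindow.exists_ge [NeZero k] (hk : 2 ≤ k) (hq : 1 ≤ q) (hqp : q ≤ p) (he : e ≤ 1)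
    (hgen : dfaoGenerates k trans q0 out a) {T i : ℕ} (hT : k ^ pumpingBound p q trans ≤ T)
    (h : IsPeriodicWindow a p q e i T) (N : ℕ) :
    ∃ T' i', N ≤ T' ∧ IsPeriodicWindow a p q e i' T' := by
  set M := windowNFA k p q (p + e) q0 trans out
  have hF : ∀ s ∈ windowStates p q q0 trans, ∀ d, M.step s d ⊆ windowStates p q q0 trans :=
    windowNFA_step_subset
  have hS : M.start ⊆ windowStates p q q0 trans := windowNFA_start_subset (by omega)
  have h2F := two_pow_card_windowStates_le p q q0 trans
  obtain ⟨x, l, y, hBx, hl, rfl, rfl⟩ := exists_word_of_pow_le hk i hT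
  have hgood := (isPeriodicWindow_iff_not_mem_windowNFA_accepts hk hq hqp hgen e _).1 h
  obtain ⟨c, d, hcd, hdF, hloop⟩ := M.exists_evalFrom_take_eq_take hF hS x
  set x1 := x.take c
  set y1 := (x.take d).drop c
  have htake : x.take d = x1 ++ y1 := by
    rw [← List.take_append_drop c (x.take d), List.take_take, min_eq_left hcd.le]
  have hloop' : M.evalFrom M.start (x1 ++ y1) = M.evalFrom M.start x1 := by
    rw [← htake]; exact hloop.symm
  set z := x.drop d ++ l :: y
  have hpump := M.evalFrom_append_flatten_replicate_append hloop'
  have heval : M.eval (x1 ++ (List.replicate N y1).flatten ++ z) = M.eval (x ++ l :: y) := by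
    have h1 := hpump 1 z
    rw [List.replicate_one, List.flatten_singleton] at h1
    unfold NFA.eval
    rw [hpump N z, ← h1, ← htake]
    simp only [z, ← List.append_assoc, List.take_append_drop]
  have hy1 : 1 ≤ y1.length := by simp [y1]; omega
  refine ⟨_, _, ?_, (isPeriodicWindow_iff_not_mem_windowNFA_accepts hk hq hqp hgen e
    (x1 ++ (List.replicate N y1).flatten ++ z)).2 ?_⟩
  · have hpow := (pow_le_ofDigitsFin_map_iff (by omega) Prod.fst
      (x1 ++ (List.replicate N y1).flatten ++ z) _).2
      ⟨x1 ++ (List.replicate N y1).flatten ++ x.drop d, l, y, by simp [z], le_rfl, hl⟩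
    refine le_trans ?_ hpow
    have hlen : N ≤ (x1 ++ (List.replicate N y1).flatten ++ x.drop d).length := by
      simp only [List.length_append, List.length_flatten, List.map_replicate, List.sum_replicate,
        smul_eq_mul]
      nlinarith
    exact hlen.trans (Nat.lt_pow_self (by omega)).le
  · rwa [M.append_mem_accepts_iff_of_eval_eq heval]

theorem IsPeriodicWindow.exists_lt_pow [NeZero k] (hk : 2 ≤ k) (hq : 1 ≤ q) (hqp : q ≤ p)
    (he : e ≤ 1) (hgen : dfaoGenerates k trans q0 out a) {T i : ℕ}
    (hT : k ^ pumpingBound p q trans ≤ T) (h : IsPeriodicWindow a p q e i T) :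
    ∃ T' < k ^ (3 * pumpingBound p q trans), ∃ i' < k ^ (3 * pumpingBound p q trans),
      k ^ pumpingBound p q trans ≤ T' ∧ IsPeriodicWindow a p q e i' T' := by
  set M := windowNFA k p q (p + e) q0 trans out
  set B := pumpingBound p q trans
  have hF : ∀ s ∈ windowStates p q q0 trans, ∀ d, M.step s d ⊆ windowStates p q q0 trans :=
    windowNFA_step_subset
  have hS : M.start ⊆ windowStates p q q0 trans := windowNFA_start_subset (by omega)
  have h2F := two_pow_card_windowStates_le p q q0 trans
  obtain ⟨x, l, y, hBx, hl, rfl, rfl⟩ := exists_word_of_pow_le hk i hT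
  have hgood := (isPeriodicWindow_iff_not_mem_windowNFA_accepts hk hq hqp hgen e _).1 h
  set x1 := x.take B
  have hx1 : x1.length = B := List.length_take_of_le hBx
  obtain ⟨x2, hx2, heq2⟩ :=
    M.exists_length_lt_evalFrom_eq hF (M.evalFrom_subset hF hS x1) (x.drop B)
  obtain ⟨y', hy', heqy⟩ :=
    M.exists_length_lt_evalFrom_eq hF (M.evalFrom_subset hF hS (x1 ++ x2 ++ [l])) y
  have heval : M.eval (x1 ++ x2 ++ l :: y') = M.eval (x ++ l :: y) := by
    unfold NFA.eval
    calc M.evalFrom M.start (x1 ++ x2 ++ l :: y')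
        = M.evalFrom (M.evalFrom M.start (x1 ++ x2 ++ [l])) y' := by
          rw [← NFA.evalFrom_append]; simp
      _ = M.evalFrom (M.evalFrom M.start (x1 ++ x.drop B ++ [l])) y := by
          rw [heqy]
          refine congrArg (M.evalFrom · y) ?_
          rw [M.evalFrom_append _ (x1 ++ x2), M.evalFrom_append _ (x1 ++ x.drop B),
            M.evalFrom_append _ x1, M.evalFrom_append _ x1, heq2]
      _ = M.evalFrom M.start (x ++ l :: y) := by
          rw [← NFA.evalFrom_append]; simp [x1]
  have hlen : (x1 ++ x2 ++ l :: y').length ≤ 3 * B := by simp; omega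
  have hlt : ∀ f : Fin k × Fin k → Fin k,
      ofDigitsFin k ((x1 ++ x2 ++ l :: y').map f) < k ^ (3 * B) := fun f =>
    (ofDigitsFin_lt k _).trans_le (Nat.pow_le_pow_right (by omega) (by rwa [List.length_map]))
  refine ⟨_, hlt Prod.fst, _, hlt Prod.snd, (pow_le_ofDigitsFin_map_iff (by omega) Prod.fst _ _).2
      ⟨x1 ++ x2, l, y', by simp, by simp [hx1], hl⟩,
    (isPeriodicWindow_iff_not_mem_windowNFA_accepts hk hq hqp hgen e _).2 ?_⟩
  rwa [M.append_mem_accepts_iff_of_eval_eq heval]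

theorem exists_isPeriodicWindow_lt_pow_iff [NeZero k] (hk : 2 ≤ k) (hq : 1 ≤ q) (hqp : q ≤ p)
    (he : e ≤ 1) (hgen : dfaoGenerates k trans q0 out a) :
    (∃ T < k ^ (3 * pumpingBound p q trans), ∃ i < k ^ (3 * pumpingBound p q trans),
      k ^ pumpingBound p q trans ≤ T ∧ IsPeriodicWindow a p q e i T) ↔
      ∀ N, ∃ T i, N ≤ T ∧ IsPeriodicWindow a p q e i T := by
  constructor
  · rintro ⟨T, -, i, -, hT, h⟩
    exact h.exists_ge hk hq hqp he hgen hT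
  · intro h
    obtain ⟨T, i, hT, hw⟩ := h (k ^ pumpingBound p q trans)
    exact hw.exists_lt_pow hk hq hqp he hgen hT

end Pumping

-- Padding the digits of `m` to length `m` is harmless since `m < k ^ m`.
def dfaoValue (k : ℕ) (trans : List (List ℕ)) (q0 : ℕ) (out : List ℕ) (m : ℕ) : ℕ :=
  out.getD (dfaoRun trans q0 ((List.range m).map fun j => m / k ^ j % k)) 0

theorem dfaoGenerates.eq_dfaoValue {k : ℕ} {trans : List (List ℕ)} {q0 : ℕ} {out : List ℕ}
    {a : ℕ → ℕ} (hk : 2 ≤ k) (hgen : dfaoGenerates k trans q0 out a) (m : ℕ) :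
    a m = dfaoValue k trans q0 out m :=
  hgen m _ (by simp only [List.mem_map]; rintro _ ⟨j, -, rfl⟩; exact Nat.mod_lt _ (by omega))
    (by rw [Nat.ofDigits_map_range_div_pow_mod, Nat.mod_eq_of_lt (Nat.lt_pow_self (by omega))])

def BoundedWindowSearch (k : ℕ) (trans : List (List ℕ)) (q0 : ℕ) (out : List ℕ) (p q e : ℕ) :
    Prop :=
  ∃ T < k ^ (3 * pumpingBound p q trans), ∃ i < k ^ (3 * pumpingBound p q trans),
    k ^ pumpingBound p q trans ≤ T ∧ ∀ j < p * T + 1, q * (j + T) + e ≤ p * T →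
      dfaoValue k trans q0 out (i + j) = dfaoValue k trans q0 out (i + j + T)

instance (k : ℕ) (trans : List (List ℕ)) (q0 : ℕ) (out : List ℕ) (p q e : ℕ) :
    Decidable (BoundedWindowSearch k trans q0 out p q e) := by
  unfold BoundedWindowSearch; infer_instance

theorem boundedWindowSearch_iff_infinite {k : ℕ} {trans : List (List ℕ)} {q0 : ℕ}
    {out : List ℕ} {a : ℕ → ℕ} {p q e : ℕ} (hk : 2 ≤ k) (hgen : dfaoGenerates k trans q0 out a)
    (hq : 1 ≤ q) (hqp : q < p) (he : e ≤ 1) :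
    BoundedWindowSearch k trans q0 out p q e ↔
      {w | IsFactorOf a w ∧ ∃ T, IsPowerWithSlack p q e T w}.Infinite := by
  have : NeZero k := ⟨by omega⟩
  have hwindow : ∀ i T, (∀ j < p * T + 1, q * (j + T) + e ≤ p * T →
      dfaoValue k trans q0 out (i + j) = dfaoValue k trans q0 out (i + j + T)) ↔
      IsPeriodicWindow a p q e i T := by
    intro i T
    simp only [IsPeriodicWindow, ← hgen.eq_dfaoValue hk]
    refine ⟨fun h j hj => h j ?_ hj, fun h j _ hj => h j hj⟩
    have := Nat.le_mul_of_pos_left j hq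
    rw [Nat.mul_add] at hj
    omega
  simp only [BoundedWindowSearch, hwindow]
  rw [exists_isPeriodicWindow_lt_pow_iff hk hq hqp.le he hgen,
    setOf_isPowerWithSlack_factor_infinite_iff (hgen.finite_range hk) hq hqp he]

section Primrec

open Primrec

variable {α : Type*} [Primcodable α]

theorem Primrec.nat_pow : Primrec₂ ((· ^ ·) : ℕ → ℕ → ℕ) :=
  Primrec₂.unpaired.1 (Primrec.nat_iff.2 Nat.Primrec.pow)

theorem Primrec.dfaoValue {k q0 m : α → ℕ} {trans : α → List (List ℕ)} {out : α → List ℕ}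
    (hk : Primrec k) (htrans : Primrec trans) (hq0 : Primrec q0) (hout : Primrec out)
    (hm : Primrec m) :
    Primrec fun x => dfaoValue (k x) (trans x) (q0 x) (out x) (m x) := by
  have hdigits : Primrec fun x => (List.range (m x)).map fun j => m x / k x ^ j % k x :=
    list_map (list_range.comp hm) (nat_mod.comp
      (nat_div.comp (hm.comp fst) (Primrec.nat_pow.comp (hk.comp fst) snd)) (hk.comp fst))
  have hstep : Primrec₂ fun x (sd : ℕ × ℕ) => dfaoStep (trans x) sd.1 sd.2 :=
    (list_getD 0).comp ((list_getD []).comp (htrans.comp fst) (fst.comp snd)) (snd.comp snd)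
  simp only [_root_.dfaoValue, dfaoRun_eq_foldl]
  exact (list_getD 0).comp hout (list_foldl hdigits hq0 hstep)

theorem PrimrecPred.exists_lt_comp {β : Type*} [Primcodable β] {P : ℕ × β → Prop}
    (hP : PrimrecPred P) {n : β → ℕ} (hn : Primrec n) : PrimrecPred fun y => ∃ x < n y, P (x, y) :=
  ((PrimrecRel.exists_mem_list (R := fun x y => P (x, y)) hP).comp (list_range.comp hn)
    Primrec.id).of_eq (by simp)

theorem PrimrecPred.forall_lt_comp {β : Type*} [Primcodable β] {P : ℕ × β → Prop}
    (hP : PrimrecPred P) {n : β → ℕ} (hn : Primrec n) : PrimrecPred fun y => ∀ x < n y, P (x, y) :=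
  ((PrimrecRel.forall_mem_list (R := fun x y => P (x, y)) hP).comp (list_range.comp hn)
    Primrec.id).of_eq (by simp)

theorem PrimrecPred.boundedWindowSearch {k q0 p q : α → ℕ} {trans : α → List (List ℕ)}
    {out : α → List ℕ} (hk : Primrec k) (htrans : Primrec trans) (hq0 : Primrec q0)
    (hout : Primrec out) (hp : Primrec p) (hq : Primrec q) (e : ℕ) :
    PrimrecPred fun x => BoundedWindowSearch (k x) (trans x) (q0 x) (out x) (p x) (q x) e := by
  have hv : Primrec₂ fun x m => dfaoValue (k x) (trans x) (q0 x) (out x) m :=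
    Primrec.dfaoValue (hk.comp fst) (htrans.comp fst) (hq0.comp fst) (hout.comp fst) snd
  have hbound : Primrec fun x => pumpingBound (p x) (q x) (trans x) :=
    Primrec.nat_pow.comp (const 2) <|
      nat_mul.comp (nat_mul.comp (const 4) (nat_add.comp (nat_add.comp hp hq) (const 2)))
        (Primrec.nat_pow.comp (nat_add.comp (list_length.comp (list_flatten.comp htrans))
          (const 2)) (const 2))
  have hB := Primrec.nat_pow.comp hk hbound
  have hN := Primrec.nat_pow.comp hk (nat_mul.comp (const 3) hbound)
  -- the window condition at `z = (j, x, T, i)`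
  have hx : Primrec fun z : ℕ × α × ℕ × ℕ => z.2.1 := fst.comp snd
  have hT : Primrec fun z : ℕ × α × ℕ × ℕ => z.2.2.1 := fst.comp (snd.comp snd)
  have hij : Primrec fun z : ℕ × α × ℕ × ℕ => z.2.2.2 + z.1 :=
    nat_add.comp (snd.comp (snd.comp snd)) fst
  have hwindow := ((Primrec.nat_le.comp
    (nat_add.comp (nat_mul.comp (hq.comp hx) (nat_add.comp fst hT)) (const e))
    (nat_mul.comp (hp.comp hx) hT)).not.or
    (Primrec.eq.comp (hv.comp hx hij) (hv.comp hx (nat_add.comp hij hT)))).of_eq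
    fun _ => imp_iff_not_or.symm
  have hall := hwindow.forall_lt_comp
    (nat_add.comp (nat_mul.comp (hp.comp fst) (fst.comp snd)) (const 1))
  -- at `z = (i, x, T)`
  have hinner := (Primrec.nat_le.comp (hB.comp (fst.comp snd)) (snd.comp snd)).and
    (hall.comp (pair (fst.comp snd) (pair (snd.comp snd) fst)))
  exact ((hinner.exists_lt_comp (hN.comp fst)).comp (pair snd fst)).exists_lt_comp hN

end Primrec

/-- It is decidable, given `k ≥ 2`, a DFAO generating a `k`-automatic sequence
`a`, and a rational `r = p/q > 1`, whether the set of factors of `a` that are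
`r`-powers is infinite; and likewise for `r⁺`-powers. -/
theorem infinitelyManyDistinctRPowers_decidable :
    ∃ f g : ℕ × List (List ℕ) × ℕ × List ℕ × ℕ × ℕ → Bool,
      Computable f ∧ Computable g ∧
      ∀ (k : ℕ) (trans : List (List ℕ)) (q0 : ℕ) (out : List ℕ) (a : ℕ → ℕ)
        (p q : ℕ),
        2 ≤ k → dfaoGenerates k trans q0 out a → 1 ≤ q → q < p →
        ((f (k, trans, q0, out, p, q) = true ↔
            {w : List ℕ | IsFactorOf a w ∧ IsRPower p q w}.Infinite) ∧
         (g (k, trans, q0, out, p, q) = true ↔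
            {w : List ℕ | IsFactorOf a w ∧ IsRPlusPower p q w}.Infinite)) := by
  open Primrec in
  have hsearch (e : ℕ) := PrimrecPred.boundedWindowSearch fst (fst.comp snd)
    (fst.comp (snd.comp snd)) (fst.comp (snd.comp (snd.comp snd)))
    (fst.comp (snd.comp (snd.comp (snd.comp snd))))
    (snd.comp (snd.comp (snd.comp (snd.comp snd)))) e
  refine ⟨_, _, (hsearch 1).decide.to_comp, (hsearch 0).decide.to_comp, ?_⟩
  intro k trans q0 out a p q hk hgen hq hqp
  simp only [decide_eq_true_iff, isRPower_iff, isRPlusPower_iff]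
  exact ⟨boundedWindowSearch_iff_infinite hk hgen hq hqp le_rfl,
    boundedWindowSearch_iff_infinite hk hgen hq hqp (Nat.zero_le 1)⟩
end

section
/- Let a = (a_n)_{n≥0} be a sequence over a finite totally ordered alphabet, and let b = (b_n)_{n≥0} be the lexicographically least sequence in the orbit closure of a. Then for every i ≥ 0 and letter c, b_i = c if and only if there exists j ≥ 0 such that a_{j+i} = c and a_l a_{l+1} ⋯ a_{l+i} ≥ a_j a_{j+1} ⋯ a_{j+i} in the lexicographic order for all l ≥ 0. -/
/-- Lexicographic order on infinite sequences over a linearly ordered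
alphabet: `x ≤ y` iff `x = y` or `x` and `y` agree before some position `n`
and `x n < y n`. -/
def SeqLexLe {Δ : Type*} [LinearOrder Δ] (x y : ℕ → Δ) : Prop :=
  x = y ∨ ∃ n : ℕ, (∀ m : ℕ, m < n → x m = y m) ∧ x n < y n

/-- `b` lies in the orbit closure of `a`: every finite prefix of `b` is a
factor of `a`. -/
def InOrbitClosure {Δ : Type*} (a b : ℕ → Δ) : Prop :=
  ∀ n : ℕ, ∃ i : ℕ, ∀ m : ℕ, m < n → b m = a (i + m)

/-- `a` is a `k`-automatic sequence: there is a DFAO (finite state set `Fin n`,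
transition `δ`, initial state `q0`, output `τ`) which, on every base-`k`
representation of `m` read least significant digit first (i.e. on `w^R`,
possibly with leading zeros in `w`), outputs `a m`. -/
def IsKAutomatic (k : ℕ) {Δ : Type*} (a : ℕ → Δ) : Prop :=
  ∃ (n : ℕ) (δ : Fin n → Fin k → Fin n) (q0 : Fin n) (τ : Fin n → Δ),
    ∀ (m : ℕ) (w : List (Fin k)),
      Nat.ofDigits k (w.map Fin.val) = m → a m = τ (w.foldl δ q0)

/-- Lexicographic comparison of the length-`len` segments of `a` beginning at
positions `j` and `l`: `a_j a_{j+1} ⋯ a_{j+len-1} ≤ a_l a_{l+1} ⋯ a_{l+len-1}`. -/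
def SegLexLe {Δ : Type*} [LinearOrder Δ] (a : ℕ → Δ) (j l len : ℕ) : Prop :=
  (∀ m : ℕ, m < len → a (j + m) = a (l + m)) ∨
    ∃ n : ℕ, n < len ∧ (∀ m : ℕ, m < n → a (j + m) = a (l + m)) ∧
      a (j + n) < a (l + n)

/-!
Every shift of `a` lies in the orbit closure, so `b` is lexicographically below all of them;
hence the length-`(i+1)` prefix of `b` is at most every length-`(i+1)` factor of `a`. That prefix
is itself a factor of `a`, so it is the least such factor, and by antisymmetry of the
lexicographic order on words of fixed length every factor attaining the minimum equals it.
-/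

section PrefixLex

variable {Δ : Type*} [LinearOrder Δ]

def PrefixLexLe (x y : ℕ → Δ) (n : ℕ) : Prop :=
  (∀ m < n, x m = y m) ∨ ∃ k < n, (∀ m < k, x m = y m) ∧ x k < y k

theorem segLexLe_iff_prefixLexLe (a : ℕ → Δ) (j l n : ℕ) :
    SegLexLe a j l n ↔ PrefixLexLe (fun m => a (j + m)) (fun m => a (l + m)) n :=
  Iff.rfl

namespace PrefixLexLe

variable {x y x' y' : ℕ → Δ} {n : ℕ}

theorem congr (h : PrefixLexLe x y n) (hx : ∀ m < n, x m = x' m) (hy : ∀ m < n, y m = y' m) :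
    PrefixLexLe x' y' n := by
  rcases h with hagree | ⟨k, hk, hagree, hlt⟩
  · exact Or.inl fun m hm => by rw [← hx m hm, ← hy m hm, hagree m hm]
  · refine Or.inr ⟨k, hk, fun m hm => ?_, ?_⟩
    · rw [← hx m (hm.trans hk), ← hy m (hm.trans hk), hagree m hm]
    · rwa [← hx k hk, ← hy k hk]

theorem not_lt_at_first_diff (h : PrefixLexLe x y n) {k : ℕ} (hk : k < n)
    (hagree : ∀ m < k, x m = y m) : ¬ y k < x k := by
  intro hlt
  rcases h with hall | ⟨k', -, hagree', hlt'⟩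
  · exact hlt.ne (hall k hk).symm
  · rcases lt_trichotomy k' k with hk' | rfl | hk'
    · exact hlt'.ne (hagree k' hk')
    · exact lt_asymm hlt hlt'
    · exact hlt.ne (hagree' k hk').symm

theorem antisymm (h₁ : PrefixLexLe x y n) (h₂ : PrefixLexLe y x n) : ∀ m < n, x m = y m := by
  rcases h₂ with hall | ⟨k, hk, hagree, hlt⟩
  · exact fun m hm => (hall m hm).symm
  · exact absurd hlt (h₁.not_lt_at_first_diff hk fun m hm => (hagree m hm).symm)

end PrefixLexLe

theorem SeqLexLe.prefixLexLe {x y : ℕ → Δ} (h : SeqLexLe x y) (n : ℕ) : PrefixLexLe x y n := by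
  rcases h with rfl | ⟨k, hagree, hlt⟩
  · exact Or.inl fun _ _ => rfl
  · rcases lt_or_ge k n with hk | hk
    · exact Or.inr ⟨k, hk, hagree, hlt⟩
    · exact Or.inl fun m hm => hagree m (hm.trans_le hk)

end PrefixLex

theorem inOrbitClosure_shift {α : Type*} (a : ℕ → α) (l : ℕ) :
    InOrbitClosure a (fun m => a (l + m)) :=
  fun _ => ⟨l, fun _ _ => rfl⟩

theorem lexLeast_orbitClosure_char_general {Δ : Type*} [LinearOrder Δ]
    (a b : ℕ → Δ) (hb : InOrbitClosure a b)
    (hleast : ∀ c : ℕ → Δ, InOrbitClosure a c → SeqLexLe b c)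
    (i : ℕ) (c : Δ) :
    b i = c ↔ ∃ j : ℕ, a (j + i) = c ∧ ∀ l : ℕ, SegLexLe a j l (i + 1) := by
  have hb_le_shift (l : ℕ) : PrefixLexLe b (fun m => a (l + m)) (i + 1) :=
    (hleast _ (inOrbitClosure_shift a l)).prefixLexLe (i + 1)
  obtain ⟨j₀, hj₀⟩ := hb (i + 1)
  constructor
  · rintro rfl
    exact ⟨j₀, (hj₀ i i.lt_succ_self).symm, fun l => (hb_le_shift l).congr hj₀ fun _ _ => rfl⟩
  · rintro ⟨j, rfl, hmin⟩
    have hshift_le_b : PrefixLexLe (fun m => a (j + m)) b (i + 1) :=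
      ((segLexLe_iff_prefixLexLe a j j₀ _).mp (hmin j₀)).congr (fun _ _ => rfl)
        fun m hm => (hj₀ m hm).symm
    exact (hb_le_shift j).antisymm hshift_le_b i i.lt_succ_self

/-- Characterization of the lexicographically least sequence `b` in the orbit
closure of `a`: `b i = c` iff there is `j ≥ 0` with `a (j+i) = c` and
`a_l a_{l+1} ⋯ a_{l+i} ≥ a_j a_{j+1} ⋯ a_{j+i}` for all `l ≥ 0`. -/
theorem lexLeast_orbitClosure_char {Δ : Type*} [Fintype Δ] [LinearOrder Δ]
    (a b : ℕ → Δ) (hb : InOrbitClosure a b)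
    (hleast : ∀ c : ℕ → Δ, InOrbitClosure a c → SeqLexLe b c)
    (i : ℕ) (c : Δ) :
    b i = c ↔ ∃ j : ℕ, a (j + i) = c ∧ ∀ l : ℕ, SegLexLe a j l (i + 1) :=
  lexLeast_orbitClosure_char_general a b hb hleast i c
end

section
/- Let k ≥ 2 and let a = (a_n)_{n≥0} be a k-automatic sequence over a finite totally ordered alphabet. Then the lexicographically least sequence b in the orbit closure of a is also k-automatic. -/
theorem Nat.add_mul_eq_add_mul_iff_s12 {k u v A B : ℕ} (hu : u < 2 * k) (hv : v < k) :
    u + k * A = v + k * B ↔ u = v ∧ A = B ∨ u = v + k ∧ B = A + 1 := by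
  constructor
  · intro h
    have hAB : A ≤ B := by
      by_contra hlt
      have := Nat.mul_le_mul_left k (show B + 1 ≤ A by omega)
      rw [mul_add] at this
      omega
    obtain ⟨e, rfl⟩ := Nat.exists_eq_add_of_le hAB
    rw [mul_add] at h
    rcases e with _ | _ | e
    · omega
    · omega
    · nlinarith
  · rintro (⟨rfl, rfl⟩ | ⟨rfl, rfl⟩) <;> ring

namespace Language

variable {α β : Type*}

theorem IsRegular.preimage_map {L : Language β} (h : L.IsRegular) (f : α → β) :
    IsRegular (List.map f ⁻¹' L : Language α) := by
  obtain ⟨σ, _, M, rfl⟩ := h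
  exact ⟨σ, inferInstance, M.comap f, DFA.accepts_comap M f⟩

theorem IsRegular.image_map {L : Language α} (h : L.IsRegular) (f : α → β) :
    IsRegular (List.map f '' L : Language β) := by
  classical
  obtain ⟨σ, _, M, rfl⟩ := h
  let N : NFA β σ := ⟨fun s b => {t | ∃ a, f a = b ∧ M.step s a = t}, {M.start}, M.accept⟩
  have hN : ∀ (y : List β) (S : Set σ) (t : σ),
      t ∈ N.evalFrom S y ↔ ∃ s ∈ S, ∃ x, x.map f = y ∧ M.evalFrom s x = t := by
    intro y
    induction y with
    | nil => simp
    | cons b y ih =>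
      intro S t
      simp only [NFA.evalFrom_cons, ih, NFA.mem_stepSet]
      constructor
      · rintro ⟨s', ⟨s, hs, a, rfl, rfl⟩, x, rfl, rfl⟩
        exact ⟨s, hs, a :: x, rfl, rfl⟩
      · rintro ⟨s, hs, _ | ⟨a, x⟩, hx, rfl⟩
        · simp at hx
        · obtain ⟨rfl, rfl⟩ := List.cons_eq_cons.mp hx
          exact ⟨_, ⟨s, hs, a, rfl, rfl⟩, x, rfl, rfl⟩
  refine ⟨Set σ, inferInstance, N.toDFA, ?_⟩
  ext y
  simp only [NFA.toDFA_correct, NFA.mem_accepts, hN, N, Set.mem_singleton_iff, ↓existsAndEq,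
    true_and, and_comm]
  exact exists_congr fun _ => and_comm

theorem IsRegular.rightQuotient {L : Language α} (h : L.IsRegular) (Z : Set (List α)) :
    IsRegular ({x | ∃ z ∈ Z, x ++ z ∈ L} : Language α) := by
  obtain ⟨σ, _, M, rfl⟩ := h
  refine ⟨σ, inferInstance,
    ⟨M.step, M.start, {s | ∃ z ∈ Z, M.evalFrom s z ∈ M.accept}⟩, ?_⟩
  ext x
  simp only [DFA.mem_accepts, DFA.eval, Set.mem_ofPred_eq, DFA.evalFrom_of_append]
  rfl

end Language

section Recognizable

open Matrix

variable {k : ℕ} {ι ι' : Type*}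

def ofDigitColumns (k : ℕ) (w : List (ι → Fin k)) (x : ι) : ℕ :=
  Nat.ofDigits k (w.map fun c => (c x : ℕ))

@[simp]
theorem ofDigitColumns_nil : ofDigitColumns k ([] : List (ι → Fin k)) = 0 := rfl

theorem ofDigitColumns_cons (c : ι → Fin k) (w : List (ι → Fin k)) (x : ι) :
    ofDigitColumns k (c :: w) x = c x + k * ofDigitColumns k w x := rfl

theorem ofDigitColumns_map_comp (w : List (ι → Fin k)) (g : ι' → ι) :
    ofDigitColumns k (w.map (· ∘ g)) = ofDigitColumns k w ∘ g := by
  ext x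
  simp [ofDigitColumns, Function.comp_def]

@[simp]
theorem ofDigitColumns_append_replicate_zero [NeZero k] (w : List (ι → Fin k)) (m : ℕ) :
    ofDigitColumns k (w ++ List.replicate m 0) = ofDigitColumns k w := by
  ext x
  simp [ofDigitColumns]

/-- Trailing zero columns are allowed, so every tuple has an encoding of each sufficiently large
length. -/
def IsKRecognizable (k : ℕ) (R : (ι → ℕ) → Prop) : Prop :=
  Language.IsRegular {w : List (ι → Fin k) | R (ofDigitColumns k w)}

namespace IsKRecognizable

variable {R R' : (ι → ℕ) → Prop}

theorem congr (h : IsKRecognizable k R) (hR : ∀ v, R v ↔ R' v) : IsKRecognizable k R' := by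
  simpa only [IsKRecognizable, hR] using h

theorem not (h : IsKRecognizable k R) : IsKRecognizable k fun v => ¬R v :=
  h.compl

theorem and (h : IsKRecognizable k R) (h' : IsKRecognizable k R') :
    IsKRecognizable k fun v => R v ∧ R' v :=
  h.inf h'

theorem comp (h : IsKRecognizable k R) (g : ι → ι') :
    IsKRecognizable k fun v : ι' → ℕ => R (v ∘ g) := by
  simpa [IsKRecognizable, Set.preimage, ofDigitColumns_map_comp] using h.preimage_map (· ∘ g)

end IsKRecognizable

theorem exists_ofDigitColumns_eq_vecCons {n : ℕ} [NeZero k] (w : List (Fin n → Fin k)) (x : ℕ)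
    (hx : x < k ^ w.length) :
    ∃ w' : List (Fin (n + 1) → Fin k),
      w'.map (· ∘ Fin.succ) = w ∧ ofDigitColumns k w' = vecCons x (ofDigitColumns k w) := by
  induction w generalizing x with
  | nil =>
    obtain rfl : x = 0 := by simpa using hx
    exact ⟨[], rfl, by rw [ofDigitColumns_nil]; exact cons_zero_zero.symm⟩
  | cons c w ih =>
    obtain ⟨w', hw', hval⟩ := ih (x / k) (Nat.div_lt_of_lt_mul (by simpa [pow_succ'] using hx))
    refine ⟨vecCons (Fin.ofNat k x) c :: w', by rw [List.map_cons, hw']; rfl,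
      funext fun i => ?_⟩
    refine Fin.cases ?_ (fun i => ?_) i
    · simp [ofDigitColumns_cons, hval, Nat.mod_add_div]
    · simp [ofDigitColumns_cons, hval]

theorem IsKRecognizable.exists {n : ℕ} (hk : 1 < k) {R : (Fin (n + 1) → ℕ) → Prop}
    (h : IsKRecognizable k R) : IsKRecognizable k fun v => ∃ x, R (vecCons x v) := by
  have : NeZero k := ⟨by omega⟩
  -- the witness may need more digits than `w` has, hence the quotient by zero columns
  have key : {w : List (Fin n → Fin k) | ∃ x, R (vecCons x (ofDigitColumns k w))} =
      {w | ∃ z ∈ Set.range fun m => List.replicate m 0,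
        w ++ z ∈ List.map (· ∘ Fin.succ) '' {w' | R (ofDigitColumns k w')}} := by
    ext w
    simp only [Set.mem_ofPred_eq, Set.exists_range_iff, Set.mem_image]
    constructor
    · rintro ⟨x, hx⟩
      obtain ⟨w', hw', hval⟩ := exists_ofDigitColumns_eq_vecCons (w ++ List.replicate x 0) x
        ((Nat.lt_pow_self hk).trans_le (Nat.pow_le_pow_right (by omega) (by simp)))
      exact ⟨x, w', by rwa [hval, ofDigitColumns_append_replicate_zero], hw'⟩
    · rintro ⟨m, w', hR, hw'⟩
      refine ⟨ofDigitColumns k w' 0, ?_⟩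
      rw [← ofDigitColumns_append_replicate_zero w m, ← hw', ofDigitColumns_map_comp]
      convert hR using 1
      exact cons_head_tail (ofDigitColumns k w')
  unfold IsKRecognizable
  rw [key]
  exact (h.image_map _).rightQuotient _

/-- `some c` records the carry `c`; `none` is a rejecting sink. -/
def addCarryStep (k : ℕ) : Option Bool → (Fin 3 → Fin k) → Option Bool
  | none, _ => none
  | some c, d =>
    if (d 0 : ℕ) + d 1 + c.toNat = d 2 then some false
    else if (d 0 : ℕ) + d 1 + c.toNat = d 2 + k then some true
    else none

theorem foldl_addCarryStep_eq_some_false_iff (w : List (Fin 3 → Fin k)) (c : Bool) :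
    w.foldl (addCarryStep k) (some c) = some false ↔
      ofDigitColumns k w 0 + ofDigitColumns k w 1 + c.toNat = ofDigitColumns k w 2 := by
  induction w generalizing c with
  | nil => cases c <;> simp
  | cons d w ih =>
    have hu : (d 0 : ℕ) + d 1 + c.toNat < 2 * k := by
      have := Bool.toNat_le c
      omega
    simp only [ofDigitColumns_cons, List.foldl_cons]
    rw [show ∀ a b e f g : ℕ, a + k * b + (e + k * f) + g = a + e + g + k * (b + f) by
      intros; ring, Nat.add_mul_eq_add_mul_iff_s12 hu (d 2).isLt, addCarryStep]
    split_ifs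
    · rw [ih, Bool.toNat_false]
      omega
    · rw [ih, Bool.toNat_true]
      omega
    · rw [List.foldl_fixed' fun _ => rfl]
      simp only [reduceCtorEq, false_iff]
      omega

theorem isKRecognizable_add : IsKRecognizable k fun v : Fin 3 → ℕ => v 0 + v 1 = v 2 :=
  ⟨Option Bool, inferInstance, ⟨addCarryStep k, some false, {some false}⟩, by
    ext w
    exact foldl_addCarryStep_eq_some_false_iff w false⟩

theorem isKRecognizable_lt (hk : 1 < k) : IsKRecognizable k fun v : Fin 2 → ℕ => v 0 < v 1 :=
  ((isKRecognizable_add.comp ![2, 0, 1]).exists hk).not.congr fun v =>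
    ⟨fun h => not_le.1 fun hle => h ⟨_, Nat.add_sub_of_le hle⟩, fun h ⟨x, hx⟩ => by
      change v 1 + x = v 0 at hx
      omega⟩

variable {Δ : Type*}

theorem IsKAutomatic.isKRecognizable [Finite ι] {a : ℕ → Δ} (ha : IsKAutomatic k a)
    (P : (ι → Δ) → Prop) : IsKRecognizable k fun v => P (a ∘ v) := by
  have := Fintype.ofFinite ι
  classical
  obtain ⟨n, δ, q0, τ, hτ⟩ := ha
  let M : DFA (ι → Fin k) (ι → Fin n) :=
    ⟨fun s c x => δ (s x) (c x), fun _ => q0, {s | P (τ ∘ s)}⟩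
  have hM : ∀ w s x, M.evalFrom s w x = (w.map (· x)).foldl δ (s x) := by
    intro w
    induction w with
    | nil => intro s x; rfl
    | cons c w ih => intro s x; exact ih _ x
  refine Language.isRegular_iff.2 ⟨ι → Fin n, inferInstance, M, ?_⟩
  ext w
  change P (τ ∘ M.eval w) ↔ P (a ∘ ofDigitColumns k w)
  congr! 1
  funext x
  rw [Function.comp_apply, Function.comp_apply, hτ _ (w.map (· x)) (by rw [List.map_map]; rfl)]
  exact congrArg τ (hM w _ x)

theorem IsKAutomatic.isKRecognizable_apply_add (hk : 1 < k) {a : ℕ → Δ} (ha : IsKAutomatic k a)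
    (P : Δ → Δ → Prop) :
    IsKRecognizable k fun v : Fin 4 → ℕ => P (a (v 0 + v 1)) (a (v 2 + v 3)) :=
  -- coordinates `(q, p, x, y, z, w)` with `p = x + y` and `q = z + w`
  (((isKRecognizable_add.comp ![2, 3, 1]).and ((isKRecognizable_add.comp ![4, 5, 0]).and
    ((ha.isKRecognizable fun f : Fin 2 → Δ => P (f 0) (f 1)).comp ![1, 0]))).exists hk
    |>.exists hk).congr fun v => by simp

theorem isKAutomatic_of_dfa {σ : Type*} [Finite σ] {a : ℕ → Δ} (M : DFA (Fin k) σ)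
    (τ : σ → Δ)
    (h : ∀ w, a (Nat.ofDigits k (w.map Fin.val)) = τ (M.eval w)) : IsKAutomatic k a := by
  obtain ⟨n, ⟨e⟩⟩ := Finite.exists_equiv_fin σ
  refine ⟨n, (M.reindex e).step, (M.reindex e).start, τ ∘ e.symm, fun m w hw => ?_⟩
  subst hw
  rw [h]
  change τ (M.eval w) = τ (e.symm ((M.reindex e).eval w))
  rw [DFA.eval_reindex, Equiv.symm_apply_apply]

theorem isKAutomatic_of_isKRecognizable [Finite Δ] {b : ℕ → Δ}
    (h : ∀ d, IsKRecognizable k fun v : Fin 1 → ℕ => b (v 0) = d) : IsKAutomatic k b := by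
  choose σ _ M hM using h
  let N : DFA (Fin k) (∀ d, σ d) :=
    ⟨fun s i d => (M d).step (s d) fun _ => i, fun d => (M d).start, ∅⟩
  have hN : ∀ w s d, N.evalFrom s w d = (M d).evalFrom (s d) (w.map fun i _ => i) := by
    intro w
    induction w with
    | nil => intro s d; rfl
    | cons c w ih => intro s d; exact ih _ d
  have hacc : ∀ w d, N.eval w d ∈ (M d).accept ↔ b (Nat.ofDigits k (w.map Fin.val)) = d := by
    intro w d
    rw [DFA.eval, hN, ← DFA.eval, ← DFA.mem_accepts, hM]
    change b (ofDigitColumns k (w.map fun (i : Fin k) (_ : Fin 1) => i) 0) = d ↔ _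
    rw [ofDigitColumns, List.map_map]
    rfl
  classical
  refine isKAutomatic_of_dfa N
    (fun s => if h : ∃ d, s d ∈ (M d).accept then h.choose else b 0) fun w => ?_
  have hex : ∃ d, N.eval w d ∈ (M d).accept := ⟨_, (hacc w _).2 rfl⟩
  rw [dif_pos hex]
  exact (hacc w _).1 hex.choose_spec

end Recognizable

section LexLeast

variable {Δ : Type*}

theorem inOrbitClosure_shift_s12 (a : ℕ → Δ) (j : ℕ) : InOrbitClosure a fun s => a (j + s) :=
  fun _ => ⟨j, fun _ _ => rfl⟩

variable [LinearOrder Δ]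

theorem SeqLexLe.not_lt_of_eqOn {x y : ℕ → Δ} (h : SeqLexLe x y) {t : ℕ}
    (heq : ∀ s < t, y s = x s) : ¬y t < x t := by
  rcases h with rfl | ⟨s, hs, hlt⟩
  · exact lt_irrefl _
  · intro hyx
    rcases lt_trichotomy s t with hst | rfl | hts
    · exact (hlt.trans_eq (heq s hst)).false
    · exact lt_asymm hlt hyx
    · exact (hs t hts ▸ hyx).false

def IsLexMinWindow (a : ℕ → Δ) (i n : ℕ) : Prop :=
  ∀ j t, t < n → (∀ s < t, a (j + s) = a (i + s)) → a (i + t) ≤ a (j + t)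

variable {a b : ℕ → Δ}

theorem isLexMinWindow_of_eqOn (hleast : ∀ c, InOrbitClosure a c → SeqLexLe b c) {i n : ℕ}
    (h : ∀ t < n, a (i + t) = b t) : IsLexMinWindow a i n := by
  intro j t ht hagree
  refine not_lt.1 fun hlt => (hleast _ (inOrbitClosure_shift_s12 a j)).not_lt_of_eqOn
    (fun s hs => ?_) (h t ht ▸ hlt)
  rw [hagree s hs, h s (hs.trans ht)]

theorem eqOn_of_isLexMinWindow (hb : InOrbitClosure a b)
    (hleast : ∀ c, InOrbitClosure a c → SeqLexLe b c) {i n : ℕ} (h : IsLexMinWindow a i n) :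
    ∀ t < n, a (i + t) = b t := by
  obtain ⟨j, hj⟩ := hb n
  intro t
  induction t using Nat.strong_induction_on with
  | _ t ih =>
    intro ht
    have hagree : ∀ s < t, a (i + s) = b s := fun s hs => ih s hs (hs.trans ht)
    refine le_antisymm ?_ (not_lt.1 ((hleast _ (inOrbitClosure_shift_s12 a i)).not_lt_of_eqOn hagree))
    rw [hj t ht]
    exact h j t ht fun s hs => by rw [← hj s (hs.trans ht), hagree s hs]

theorem apply_eq_iff_exists_isLexMinWindow (hb : InOrbitClosure a b)
    (hleast : ∀ c, InOrbitClosure a c → SeqLexLe b c) (m : ℕ) (d : Δ) :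
    b m = d ↔ ∃ i, IsLexMinWindow a i (m + 1) ∧ a (i + m) = d := by
  constructor
  · rintro rfl
    obtain ⟨i, hi⟩ := hb (m + 1)
    exact ⟨i, isLexMinWindow_of_eqOn hleast fun t ht => (hi t ht).symm,
      (hi m m.lt_succ_self).symm⟩
  · rintro ⟨i, hi, rfl⟩
    exact (eqOn_of_isLexMinWindow hb hleast hi m m.lt_succ_self).symm

theorem IsKAutomatic.isKRecognizable_isLexMinWindow {k : ℕ} (hk : 1 < k)
    (ha : IsKAutomatic k a) :
    IsKRecognizable k fun v : Fin 2 → ℕ => IsLexMinWindow a (v 0) (v 1 + 1) := by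
  -- coordinates `(s, t, j, i, m)`, and `(t, j, i, m)` once `s` is quantified
  have agree : IsKRecognizable k fun v : Fin 4 → ℕ => ∀ s < v 0, a (v 1 + s) = a (v 2 + s) :=
    ((((isKRecognizable_lt hk).comp ![0, 1]).and
      ((ha.isKRecognizable_apply_add hk fun x y => x ≠ y).comp ![2, 0, 3, 0])).exists
      hk).not.congr fun v => by simp
  refine ((((((isKRecognizable_lt hk).comp ![3, 0]).not.and agree).and
    ((ha.isKRecognizable_apply_add hk fun x y => ¬x ≤ y).comp ![2, 0, 1, 0])).exists hk).exists
    hk).not.congr fun v => ?_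
  simp [IsLexMinWindow]

end LexLeast

/-- If `a` is `k`-automatic, then the lexicographically least sequence `b` in
the orbit closure of `a` is also `k`-automatic. -/
theorem lexLeast_orbitClosure_automatic {Δ : Type*} [Fintype Δ] [LinearOrder Δ]
    (k : ℕ) (hk : 2 ≤ k) (a b : ℕ → Δ) (ha : IsKAutomatic k a)
    (hb : InOrbitClosure a b)
    (hleast : ∀ c : ℕ → Δ, InOrbitClosure a c → SeqLexLe b c) :
    IsKAutomatic k b := by
  refine isKAutomatic_of_isKRecognizable fun d => ?_
  refine (((ha.isKRecognizable_isLexMinWindow hk).and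
    ((ha.isKRecognizable_apply_add hk fun x _ => x = d).comp ![0, 1, 0, 1])).exists hk).congr
    fun v => ?_
  simp [apply_eq_iff_exists_isLexMinWindow hb hleast]
end

section
/- Let k ≥ 2 and let a = (a_n)_{n≥0} be a k-automatic sequence over a finite totally ordered alphabet. Then the lexicographically least sequence in the reverse orbit closure of a is k-automatic. -/
/-- `b` lies in the reverse orbit closure of `a`: every finite prefix of `b`
is a prefix of some word `a_r a_{r-1} ⋯ a_1 a_0`. -/
def InRevOrbitClosure {Δ : Type*} (a b : ℕ → Δ) : Prop :=
  ∀ n : ℕ, ∃ r : ℕ, n ≤ r + 1 ∧ ∀ m : ℕ, m < n → b m = a (r - m)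

/-!
Write `a m = τ (δ* q₀ m)` for a DFAO reading `m` least significant digit first. An element `c` of
the reverse orbit closure is a limit of the sequences `m ↦ a (r - m)`. Computing `r - m` by
schoolbook subtraction and feeding its digits to the automaton, `c` is described by the `k`-adic
digits `x` of a limit of the `r` together with, at each level `P`, the output `φ P` as a function
of the pair (automaton state, borrow) reached after `P` digits; conversely every coherent and
realizable such description gives an element of the closure.

For the least element `b`, pigeonhole gives levels `P < Q` with the same output function, the same
reachable states and the same lexicographic order that these induce on output functions.
Exchanging the futures at `P` and `Q` produces elements of the closure that `b` cannot exceed, so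
the two futures produce the same blocks; hence the digits and outputs can be repeated with period
`Q - P` without changing `b`. An eventually periodic description is a finite automaton.
-/

namespace RevOrbitLexLeast

section Automata
variable {Δ : Type*} {k : ℕ}

def digitsValue (u : List (Fin k)) : ℕ := Nat.ofDigits k (u.map Fin.val)

@[simp] theorem digitsValue_nil : digitsValue ([] : List (Fin k)) = 0 := rfl

theorem digitsValue_cons (d : Fin k) (u : List (Fin k)) :
    digitsValue (d :: u) = d + k * digitsValue u := by
  simp [digitsValue, Nat.ofDigits_cons]

theorem digitsValue_append (u w : List (Fin k)) :
    digitsValue (u ++ w) = digitsValue u + k ^ u.length * digitsValue w := by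
  simp [digitsValue, Nat.ofDigits_append]

theorem digitsValue_lt (hk : 1 < k) (u : List (Fin k)) : digitsValue u < k ^ u.length := by
  simpa [digitsValue] using Nat.ofDigits_lt_base_pow_length hk (l := u.map Fin.val) (by simp)

theorem self_lt_pow_succ (hk : 1 < k) (n : ℕ) : n < k ^ (n + 1) :=
  (Nat.lt_pow_self hk).trans (Nat.pow_lt_pow_right hk n.lt_succ_self)

theorem isKAutomatic_of_finite {σ : Type*} [Finite σ] {b : ℕ → Δ} (δ : σ → Fin k → σ) (s₀ : σ)
    (τ : σ → Δ) (h : ∀ w : List (Fin k), b (digitsValue w) = τ (w.foldl δ s₀)) :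
    IsKAutomatic k b := by
  let e := Finite.equivFin σ
  have hfold : ∀ (w : List (Fin k)) (s : σ),
      w.foldl (fun i d => e (δ (e.symm i) d)) (e s) = e (w.foldl δ s) := by
    intro w
    induction w with
    | nil => intro s; rfl
    | cons d w ih => intro s; simpa using ih (δ s d)
  refine ⟨Nat.card σ, fun i d => e (δ (e.symm i) d), e s₀, τ ∘ e.symm, ?_⟩
  rintro m w rfl
  rw [← digitsValue, h w]
  simp [hfold]

def levelRun {σ : Type*} (f : ℕ → σ → Fin k → σ) : ℕ → σ → List (Fin k) → σ
  | _, s, [] => s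
  | i, s, d :: w => levelRun f (i + 1) (f i s d) w

/-- The current tail of the sequence of (transition, output) pairs becomes part of the state. -/
theorem isKAutomatic_of_finite_tails {σ : Type*} [Finite σ] {b : ℕ → Δ}
    (f : ℕ → σ → Fin k → σ) (o : ℕ → σ → Δ) (s₀ : σ)
    (hfin : (Set.range fun i j => (f (i + j), o (i + j))).Finite)
    (h : ∀ w : List (Fin k), b (digitsValue w) = o w.length (levelRun f 0 s₀ w)) :
    IsKAutomatic k b := by
  set tail : ℕ → ℕ → (σ → Fin k → σ) × (σ → Δ) := fun i j => (f (i + j), o (i + j)) with htail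
  have : Finite (Set.range tail) := hfin.to_subtype
  have hshift : ∀ i, (fun j => tail i (j + 1)) = tail (i + 1) := fun i => by
    funext j; simp only [htail, Nat.add_right_comm i, Nat.add_assoc]
  let δ' : Set.range tail × σ → Fin k → Set.range tail × σ := fun p d =>
    (⟨fun j => p.1.1 (j + 1), by obtain ⟨i, hi⟩ := p.1.2; exact ⟨i + 1, by rw [← hshift, hi]⟩⟩,
      (p.1.1 0).1 p.2 d)
  have hrun : ∀ (w : List (Fin k)) (i : ℕ) (s : σ),
      w.foldl δ' (⟨tail i, i, rfl⟩, s) = (⟨tail (i + w.length), _, rfl⟩, levelRun f i s w) := by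
    intro w
    induction w with
    | nil => intro i s; rfl
    | cons d w ih =>
      intro i s
      have hstep : δ' (⟨tail i, i, rfl⟩, s) d = (⟨tail (i + 1), _, rfl⟩, f i s d) := by
        refine Prod.ext (Subtype.ext (hshift i)) ?_
        simp [δ', htail]
      simp only [List.foldl_cons, hstep, ih, levelRun, List.length_cons, Nat.add_assoc,
        Nat.add_comm 1]
  refine isKAutomatic_of_finite δ' (⟨tail 0, 0, rfl⟩, s₀) (fun p => (p.1.1 0).2 p.2) fun w => ?_
  rw [hrun, h]
  simp [htail]

theorem finite_range_tails {α : Type*} {g : ℕ → α} {P l : ℕ}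
    (hg : ∀ i, P ≤ i → g (i + l) = g i) (hl : 0 < l) :
    (Set.range fun i j => g (i + j)).Finite := by
  refine ((Set.finite_Iio (P + l)).image fun i j => g (i + j)).subset ?_
  rintro _ ⟨i, rfl⟩
  induction i using Nat.strong_induction_on with
  | _ i ih =>
    by_cases hi : i < P + l
    · exact ⟨i, hi, rfl⟩
    · obtain ⟨i', hi', he⟩ := ih (i - l) (by omega)
      refine ⟨i', hi', he.trans ?_⟩
      funext j
      show g (i - l + j) = g (i + j)
      rw [← hg (i - l + j) (by omega), show i - l + j + l = i + j by omega]

end Automata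

section Subtraction
variable {σ : Type*} {K : ℕ} (δ : σ → Fin K → σ)

/-- One step of schoolbook subtraction fed into `δ`: in the state `(q, c)` (automaton state,
borrow), subtract the digit `d` and the borrow `c` from the digit `e`. -/
def subStep (e : Fin K) (d : ℕ) (s : σ × Bool) : σ × Bool :=
  if h : d + s.2.toNat ≤ e then (δ s.1 ⟨e - (d + s.2.toNat), by omega⟩, false)
  else (δ s.1 ⟨K + e - (d + s.2.toNat), by have := e.isLt; omega⟩, true)

/-- Subtracts the low `u.length` digits of `m` from the number with digits `u`. -/
def runSub : List (Fin K) → ℕ → σ × Bool → σ × Bool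
  | [], _, s => s
  | e :: u, m, s => runSub u (m / K) (subStep δ e (m % K) s)

variable {δ}

theorem subStep_spec (e : Fin K) {d : ℕ} (hd : d < K) (s : σ × Bool) :
    ∃ e' : Fin K, (subStep δ e d s).1 = δ s.1 e' ∧
      e' + d + s.2.toNat = e + K * (subStep δ e d s).2.toNat := by
  have := Bool.toNat_le s.2
  unfold subStep
  split_ifs with h
  · exact ⟨_, rfl, by simp; omega⟩
  · exact ⟨_, rfl, by simp; omega⟩

theorem runSub_append (u w : List (Fin K)) (m : ℕ) (s : σ × Bool) :
    runSub δ (u ++ w) m s = runSub δ w (m / K ^ u.length) (runSub δ u m s) := by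
  induction u generalizing m s with
  | nil => simp [runSub]
  | cons e u ih =>
    rw [List.cons_append, runSub, runSub, ih, Nat.div_div_eq_div_mul, List.length_cons, pow_succ']

theorem runSub_mod (u : List (Fin K)) (m : ℕ) (s : σ × Bool) :
    runSub δ u (m % K ^ u.length) s = runSub δ u m s := by
  induction u generalizing m s with
  | nil => rfl
  | cons e u ih =>
    rw [runSub, runSub, List.length_cons, pow_succ', Nat.mod_mul_right_div_self,
      Nat.mod_mul_right_mod, ih]

theorem runSub_spec (u : List (Fin K)) (m : ℕ) (s : σ × Bool) :
    ∃ y : List (Fin K), y.length = u.length ∧ (runSub δ u m s).1 = y.foldl δ s.1 ∧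
      digitsValue y + m % K ^ u.length + s.2.toNat =
        digitsValue u + K ^ u.length * (runSub δ u m s).2.toNat := by
  induction u generalizing m s with
  | nil => exact ⟨[], rfl, rfl, by simp [runSub, Nat.mod_one]⟩
  | cons e u ih =>
    obtain ⟨e', he', hstep⟩ := subStep_spec (δ := δ) e (Nat.mod_lt m e.pos) s
    obtain ⟨y, hlen, hy, hval⟩ := ih (m / K) (subStep δ e (m % K) s)
    refine ⟨e' :: y, by simp [hlen], by simp [runSub, hy, he'], ?_⟩
    rw [digitsValue_cons, digitsValue_cons, List.length_cons, pow_succ', Nat.mod_mul]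
    simp only [runSub] at hval ⊢
    nlinarith [hval, hstep]

theorem runSub_eq_of_le (hK : 1 < K) {u : List (Fin K)} {m : ℕ} {s : σ × Bool}
    (h : m + s.2.toNat ≤ digitsValue u) :
    ∃ y : List (Fin K), runSub δ u m s = (y.foldl δ s.1, false) ∧
      digitsValue y = digitsValue u - (m + s.2.toNat) := by
  obtain ⟨y, hlen, hy, hval⟩ := runSub_spec (δ := δ) u m s
  have hu := digitsValue_lt hK u
  have hy' := digitsValue_lt hK y
  rw [Nat.mod_eq_of_lt (by omega)] at hval
  rw [hlen] at hy'
  have hborrow : (runSub δ u m s).2 = false := by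
    cases hb : (runSub δ u m s).2
    · rfl
    · rw [hb] at hval; simp at hval; omega
  rw [hborrow] at hval
  exact ⟨y, Prod.ext hy hborrow, by simp at hval; omega⟩

theorem le_of_runSub_snd_eq_false {u : List (Fin K)} {m : ℕ} {s : σ × Bool}
    (hm : m < K ^ u.length) (h : (runSub δ u m s).2 = false) : m + s.2.toNat ≤ digitsValue u := by
  obtain ⟨y, -, -, hval⟩ := runSub_spec (δ := δ) u m s
  rw [h, Nat.mod_eq_of_lt hm] at hval
  simp at hval
  omega

end Subtraction

section Levels
variable {σ : Type*} {K : ℕ}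

def takeDigits (x : ℕ → Fin K) (n : ℕ) : List (Fin K) := (List.range n).map x

@[simp] theorem length_takeDigits (x : ℕ → Fin K) (n : ℕ) : (takeDigits x n).length = n := by
  simp [takeDigits]

theorem takeDigits_add (x : ℕ → Fin K) (P L : ℕ) :
    takeDigits x (P + L) = takeDigits x P ++ takeDigits (fun j => x (P + j)) L := by
  simp [takeDigits, List.range_add, Function.comp_def]

theorem takeDigits_congr {x y : ℕ → Fin K} {n : ℕ} (h : ∀ i < n, x i = y i) :
    takeDigits x n = takeDigits y n :=
  List.map_congr_left fun i hi => h i (List.mem_range.mp hi)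

variable (δ : σ → Fin K → σ) (q₀ : σ)

/-- The state of the subtraction of `m` from the `K`-adic integer with digits `x`, after the
lowest `P` digits. -/
def stateAt (x : ℕ → Fin K) (P m : ℕ) : σ × Bool := runSub δ (takeDigits x P) m (q₀, false)

def reach (x : ℕ → Fin K) (P : ℕ) : Set (σ × Bool) := stateAt δ q₀ x P '' Set.Iio (K ^ P)

variable {δ q₀}

theorem stateAt_congr {x y : ℕ → Fin K} {P : ℕ} (h : ∀ i < P, x i = y i) (m : ℕ) :
    stateAt δ q₀ x P m = stateAt δ q₀ y P m := by
  rw [stateAt, stateAt, takeDigits_congr h]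

theorem stateAt_mod (x : ℕ → Fin K) (P m : ℕ) :
    stateAt δ q₀ x P (m % K ^ P) = stateAt δ q₀ x P m := by
  simpa [stateAt] using runSub_mod (δ := δ) (takeDigits x P) m (q₀, false)

theorem stateAt_add (x : ℕ → Fin K) (P L m : ℕ) :
    stateAt δ q₀ x (P + L) m =
      runSub δ (takeDigits (fun j => x (P + j)) L) (m / K ^ P) (stateAt δ q₀ x P m) := by
  rw [stateAt, takeDigits_add, runSub_append, length_takeDigits, stateAt]

theorem reach_congr {x y : ℕ → Fin K} {P : ℕ} (h : ∀ i < P, x i = y i) :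
    reach δ q₀ x P = reach δ q₀ y P := by
  simp only [reach, funext (stateAt_congr (δ := δ) (q₀ := q₀) h)]

theorem reach_add (hK : 0 < K) (x : ℕ → Fin K) (P L : ℕ) :
    reach δ q₀ x (P + L) = Set.image2 (fun s t => runSub δ (takeDigits (fun j => x (P + j)) L) t s)
      (reach δ q₀ x P) (Set.Iio (K ^ L)) := by
  have hP : 0 < K ^ P := pow_pos hK P
  ext s
  simp only [reach, Set.mem_image, Set.mem_image2, Set.mem_Iio, exists_exists_and_eq_and]
  constructor
  · rintro ⟨m, hm, rfl⟩
    refine ⟨m % K ^ P, Nat.mod_lt m hP, m / K ^ P, ?_, ?_⟩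
    · rw [Nat.div_lt_iff_lt_mul hP, ← pow_add, Nat.add_comm]; exact hm
    · rw [stateAt_mod, stateAt_add]
  · rintro ⟨j, hj, t, ht, rfl⟩
    refine ⟨j + K ^ P * t, ?_, ?_⟩
    · calc j + K ^ P * t < K ^ P * (t + 1) := by rw [Nat.mul_succ]; omega
        _ ≤ K ^ P * K ^ L := Nat.mul_le_mul_left _ ht
        _ = K ^ (P + L) := (pow_add K P L).symm
    · rw [stateAt_add, ← stateAt_mod, Nat.add_mul_div_left _ _ hP, Nat.add_mul_mod_self_left,
        Nat.mod_eq_of_lt hj, Nat.div_eq_of_lt hj, Nat.zero_add]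

theorem runSub_mem_reach (hK : 0 < K) {x : ℕ → Fin K} {P : ℕ} {s : σ × Bool}
    (hs : s ∈ reach δ q₀ x P) (L t : ℕ) :
    runSub δ (takeDigits (fun j => x (P + j)) L) t s ∈ reach δ q₀ x (P + L) := by
  rw [reach_add hK, ← runSub_mod, length_takeDigits]
  exact Set.mem_image2_of_mem hs (Nat.mod_lt t (pow_pos hK L))

theorem reach_add_eq_of_eq (hK : 0 < K) {x y : ℕ → Fin K} {P Q : ℕ}
    (h : reach δ q₀ x P = reach δ q₀ y Q) (L : ℕ) (hxy : ∀ j < L, x (P + j) = y (Q + j)) :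
    reach δ q₀ x (P + L) = reach δ q₀ y (Q + L) := by
  rw [reach_add hK, reach_add hK, h, takeDigits_congr hxy]

end Levels

section Representations
variable {σ Δ : Type*} {K : ℕ} (δ : σ → Fin K → σ) (q₀ : σ) (τ : σ → Δ)

/-- `x` are the digits of a `K`-adic integer `r` and `φ P s` is the value of `a (r - m)` as a
function of the state `s` of the subtraction after `P` digits; a further digit `0` of `m` must not
change it. -/
def Coherent (x : ℕ → Fin K) (φ : ℕ → σ × Bool → Δ) : Prop :=
  ∀ P s, φ P s = φ (P + 1) (subStep δ (x P) 0 s)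

/-- Each level is realised by finitely many further digits of a genuine minuend. -/
def Realizable (x : ℕ → Fin K) (φ : ℕ → σ × Bool → Δ) : Prop :=
  ∀ P, ∃ w : List (Fin K), ∀ s ∈ reach δ q₀ x P,
    (runSub δ w 0 s).2 = false ∧ φ P s = τ (runSub δ w 0 s).1

/-- The `t`-th block of values of the future `(x, φ)` of a level, as a function of the state
reached at that level: `c (K ^ P * t + j) = blockOut (x (P + ·)) (φ (P + ·)) t (stateAt x P j)`. -/
def blockOut (x : ℕ → Fin K) (φ : ℕ → σ × Bool → Δ) (t : ℕ) (s : σ × Bool) : Δ :=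
  φ (t + 1) (runSub δ (takeDigits x (t + 1)) t s)

def repSeq (x : ℕ → Fin K) (φ : ℕ → σ × Bool → Δ) (m : ℕ) : Δ := blockOut δ x φ m (q₀, false)

variable {δ q₀ τ} {x : ℕ → Fin K} {φ : ℕ → σ × Bool → Δ}

theorem Coherent.shift (h : Coherent δ x φ) (P : ℕ) :
    Coherent δ (fun j => x (P + j)) (fun j => φ (P + j)) :=
  fun i s => h (P + i) s

theorem runSub_takeDigits_succ (x : ℕ → Fin K) (P m : ℕ) (s : σ × Bool) :
    runSub δ (takeDigits x (P + 1)) m s =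
      subStep δ (x P) (m / K ^ P % K) (runSub δ (takeDigits x P) m s) := by
  rw [takeDigits_add, runSub_append, length_takeDigits]
  simp [takeDigits, runSub]

theorem Coherent.apply_runSub_eq (hK : 0 < K) (h : Coherent δ x φ) {m P Q : ℕ}
    (hm : m < K ^ P) (hPQ : P ≤ Q) (s : σ × Bool) :
    φ Q (runSub δ (takeDigits x Q) m s) = φ P (runSub δ (takeDigits x P) m s) := by
  induction Q, hPQ using Nat.le_induction with
  | base => rfl
  | succ Q hPQ ih =>
    have hmQ : m < K ^ Q := hm.trans_le (Nat.pow_le_pow_right hK hPQ)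
    rw [runSub_takeDigits_succ, Nat.div_eq_of_lt hmQ, Nat.zero_mod, ← h, ih]

theorem Coherent.blockOut_eq (hK : 1 < K) (h : Coherent δ x φ) {t L : ℕ} (ht : t < K ^ L)
    (s : σ × Bool) : blockOut δ x φ t s = φ L (runSub δ (takeDigits x L) t s) := by
  rcases le_total L (t + 1) with hL | hL
  · exact h.apply_runSub_eq (by omega) ht hL s
  · exact (h.apply_runSub_eq (by omega) (self_lt_pow_succ hK t) hL s).symm

theorem blockOut_congr {x' : ℕ → Fin K} {φ' : ℕ → σ × Bool → Δ} {t : ℕ}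
    (hx : ∀ j ≤ t, x j = x' j) (hφ : φ (t + 1) = φ' (t + 1)) :
    blockOut δ x φ t = blockOut δ x' φ' t := by
  funext s
  rw [blockOut, blockOut, hφ, takeDigits_congr fun j hj => hx j (by omega)]

theorem Coherent.blockOut_eq_shift (hK : 1 < K) (h : Coherent δ x φ) (L t : ℕ) (s : σ × Bool) :
    blockOut δ x φ t s = blockOut δ (fun j => x (L + j)) (fun j => φ (L + j)) (t / K ^ L)
      (runSub δ (takeDigits x L) t s) := by
  have ht : t < K ^ (L + (t + 1)) :=
    (Nat.lt_pow_self hK).trans_le (Nat.pow_le_pow_right (by omega) (by omega))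
  have ht' : t / K ^ L < K ^ (t + 1) := (Nat.div_le_self _ _).trans_lt (self_lt_pow_succ hK t)
  rw [h.blockOut_eq hK ht, (h.shift L).blockOut_eq hK ht', takeDigits_add, runSub_append,
    length_takeDigits]

theorem stateAt_mem_reach (hK : 0 < K) (x : ℕ → Fin K) (P m : ℕ) :
    stateAt δ q₀ x P m ∈ reach δ q₀ x P :=
  ⟨m % K ^ P, Nat.mod_lt m (pow_pos hK P), stateAt_mod x P m⟩

theorem Coherent.repSeq_eq (hK : 1 < K) (h : Coherent δ x φ) (P m : ℕ) :
    repSeq δ q₀ x φ m =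
      blockOut δ (fun j => x (P + j)) (fun j => φ (P + j)) (m / K ^ P) (stateAt δ q₀ x P m) :=
  h.blockOut_eq_shift hK P m _

theorem Coherent.inRevOrbitClosure (hK : 1 < K) {a : ℕ → Δ}
    (ha : ∀ w : List (Fin K), a (digitsValue w) = τ (w.foldl δ q₀))
    (hcoh : Coherent δ x φ) (hreal : Realizable δ q₀ τ x φ) :
    InRevOrbitClosure a (repSeq δ q₀ x φ) := by
  intro n
  obtain ⟨w, hw⟩ := hreal n
  set u := takeDigits x n ++ w
  have hsplit : ∀ m < n, runSub δ u m (q₀, false) = runSub δ w 0 (stateAt δ q₀ x n m) := by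
    intro m hm
    rw [runSub_append, length_takeDigits, Nat.div_eq_of_lt (hm.trans (Nat.lt_pow_self hK))]
    rfl
  have hle : ∀ m < n, m ≤ digitsValue u := by
    intro m hm
    have hmu : m < K ^ u.length := (hm.trans (Nat.lt_pow_self hK)).trans_le
      (Nat.pow_le_pow_right (by omega) (by simp [u]))
    simpa using le_of_runSub_snd_eq_false (s := (q₀, false)) hmu
      (by rw [hsplit m hm]; exact (hw _ (stateAt_mem_reach (by omega) x n m)).1)
  refine ⟨digitsValue u, by have := hle (n - 1); omega, fun m hm => ?_⟩
  obtain ⟨y, hy, hval⟩ := runSub_eq_of_le (δ := δ) hK (u := u) (s := (q₀, false))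
    (by simpa using hle m hm)
  rw [repSeq, hcoh.blockOut_eq hK (hm.trans (Nat.lt_pow_self hK)), ← stateAt,
    (hw _ (stateAt_mem_reach (by omega) x n m)).2, ← hsplit m hm, hy, ← ha, hval]
  simp

end Representations

section Extraction
variable {σ Δ : Type*} {K : ℕ} {δ : σ → Fin K → σ} {q₀ : σ} {τ : σ → Δ}

section Digits
variable [NeZero K]

def digitOf (r i : ℕ) : Fin K := Fin.ofNat K (r / K ^ i)

theorem digitsValue_takeDigits_digitOf (r L : ℕ) :
    digitsValue (takeDigits (digitOf (K := K) r) L) = r % K ^ L := by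
  induction L with
  | zero => simp [takeDigits, Nat.mod_one]
  | succ L ih =>
    rw [takeDigits_add, digitsValue_append, ih, Nat.mod_pow_succ]
    simp [takeDigits, digitsValue, digitOf]

variable (δ) in
/-- `r` has at most `r + 1` digits, so this runs over all digits of `r` above level `P`. -/
def restRun (r P : ℕ) : σ × Bool → σ × Bool :=
  runSub δ (takeDigits (fun j => digitOf r (P + j)) (r + 1 - P)) 0

theorem restRun_stateAt (hK : 1 < K) {r P m : ℕ} (hP : P ≤ r + 1) (hm : m < K ^ P)
    (hmr : m ≤ r) :
    ∃ y : List (Fin K), restRun δ r P (stateAt δ q₀ (digitOf r) P m) = (y.foldl δ q₀, false) ∧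
      digitsValue y = r - m := by
  have hsplit := takeDigits_add (digitOf (K := K) r) P (r + 1 - P)
  rw [Nat.add_sub_cancel' hP] at hsplit
  have hval : digitsValue (takeDigits (digitOf (K := K) r) (r + 1)) = r := by
    rw [digitsValue_takeDigits_digitOf, Nat.mod_eq_of_lt (self_lt_pow_succ hK _)]
  obtain ⟨y, hy, hyv⟩ := runSub_eq_of_le (δ := δ) hK (u := takeDigits (digitOf r) (r + 1))
    (m := m) (s := (q₀, false)) (by simpa [hval] using hmr)
  refine ⟨y, ?_, by simpa [hval] using hyv⟩
  rw [← hy, hsplit, runSub_append, length_takeDigits, Nat.div_eq_of_lt hm]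
  rfl

theorem restRun_succ {r P : ℕ} (hP : P + 1 ≤ r + 1) (s : σ × Bool) :
    restRun δ r P s = restRun δ r (P + 1) (subStep δ (digitOf r P) 0 s) := by
  simp only [restRun, show r + 1 - P = 1 + (r + 1 - (P + 1)) by omega, takeDigits_add,
    runSub_append]
  simp [takeDigits, runSub, Nat.add_assoc]

end Digits

theorem exists_eventually_eq {α β : Type*} [Finite β] (U : Ultrafilter α) (f : α → β) :
    ∃ b, ∀ᶠ a in (U : Filter α), f a = b :=
  Ultrafilter.eventually_exists_iff.mp (.of_forall fun a => ⟨f a, rfl⟩)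

/-- Take the limits, along an ultrafilter, of the digits of the witnesses `r` and of the maps
`restRun δ r P`. -/
theorem exists_rep [Finite σ] (hK : 1 < K) {a b : ℕ → Δ}
    (ha : ∀ w : List (Fin K), a (digitsValue w) = τ (w.foldl δ q₀)) (hb : InRevOrbitClosure a b) :
    ∃ x φ, Coherent δ x φ ∧ Realizable δ q₀ τ x φ ∧ b = repSeq δ q₀ x φ := by
  have : NeZero K := ⟨by omega⟩
  choose r hr hbr using hb
  choose x hx using fun i =>
    exists_eventually_eq (Filter.hyperfilter ℕ) fun n => digitOf (K := K) (r n) i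
  choose Φ hΦ using fun P => exists_eventually_eq (Filter.hyperfilter ℕ) fun n => restRun δ (r n) P
  have hlarge : ∀ c, ∀ᶠ n in (Filter.hyperfilter ℕ : Filter ℕ), c ≤ n := fun c =>
    (Filter.eventually_ge_atTop c).filter_mono Nat.hyperfilter_le_atTop
  have hpre : ∀ P, ∀ᶠ n in (Filter.hyperfilter ℕ : Filter ℕ), ∀ i < P, digitOf (r n) i = x i :=
    fun P => (Filter.eventually_all_finite (Set.finite_Iio P)).2 fun i _ => hx i
  refine ⟨x, fun P s => τ (Φ P s).1, fun P s => ?_, fun P => ?_, funext fun m => ?_⟩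
  · obtain ⟨n, hn₁, hn₂, hn₃, hn₄⟩ :=
      ((hΦ P).and ((hΦ (P + 1)).and ((hx P).and (hlarge (P + 1))))).exists
    have := hr n
    simp only [← hn₁, ← hn₂, ← hn₃, restRun_succ (δ := δ) (show P + 1 ≤ r n + 1 by omega)]
  · obtain ⟨n, hn₁, hn₂, hn₃⟩ := ((hΦ P).and ((hpre P).and (hlarge (K ^ P)))).exists
    refine ⟨takeDigits (fun j => digitOf (r n) (P + j)) (r n + 1 - P), ?_⟩
    rintro _ ⟨m, hm, rfl⟩
    have := hr n
    have := Nat.lt_pow_self (n := P) hK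
    obtain ⟨y, hy, -⟩ := restRun_stateAt (δ := δ) (q₀ := q₀) hK (show P ≤ r n + 1 by omega) hm
      (by simp at hm; omega)
    rw [stateAt_congr fun i hi => (hn₂ i hi).symm]
    change (restRun δ (r n) P _).2 = false ∧ τ (Φ P _).1 = τ (restRun δ (r n) P _).1
    rw [← hn₁, hy]
    simp
  · obtain ⟨n, hn₁, hn₂, hn₃⟩ := ((hΦ (m + 1)).and ((hpre (m + 1)).and (hlarge (m + 1)))).exists
    have := hr n
    obtain ⟨y, hy, hyv⟩ := restRun_stateAt (δ := δ) (q₀ := q₀) hK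
      (show m + 1 ≤ r n + 1 by omega) (self_lt_pow_succ hK m) (by omega)
    rw [hbr n m (by omega), repSeq, blockOut, ← stateAt, stateAt_congr fun i hi => (hn₂ i hi).symm,
      ← hn₁, hy, ← ha, hyv]

end Extraction

section Lex
variable {Δ σ : Type*}

def StreamLe (A : Set σ) (lt : (σ → Δ) → (σ → Δ) → Prop) (F G : ℕ → σ → Δ) : Prop :=
  (∀ t, Set.EqOn (F t) (G t) A) ∨ ∃ t, (∀ t' < t, Set.EqOn (F t') (G t') A) ∧ lt (F t) (G t)

theorem StreamLe.eqOn {A : Set σ} {lt : (σ → Δ) → (σ → Δ) → Prop} {F G : ℕ → σ → Δ}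
    (hne : ∀ ψ ψ', lt ψ ψ' → ¬Set.EqOn ψ ψ' A) (hasymm : ∀ ψ ψ', lt ψ ψ' → ¬lt ψ' ψ)
    (h : StreamLe A lt F G) (h' : StreamLe A lt G F) (t : ℕ) : Set.EqOn (F t) (G t) A := by
  rcases h with h | ⟨t₁, hpre₁, hlt₁⟩
  · exact h t
  rcases h' with h' | ⟨t₂, hpre₂, hlt₂⟩
  · exact (h' t).symm
  exfalso
  rcases lt_trichotomy t₁ t₂ with ht | rfl | ht
  · exact hne _ _ hlt₁ (hpre₂ t₁ ht).symm
  · exact hasymm _ _ hlt₁ hlt₂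
  · exact hne _ _ hlt₂ (hpre₁ t₂ ht).symm

variable [LinearOrder Δ]

def LexLtBelow (n : ℕ) (f g : ℕ → Δ) : Prop := ∃ m < n, (∀ i < m, f i = g i) ∧ f m < g m

theorem LexLtBelow.not_lexLtBelow {n : ℕ} {f g : ℕ → Δ} (h : LexLtBelow n f g) :
    ¬LexLtBelow n g f := by
  rintro ⟨m₂, -, h₂, l₂⟩
  obtain ⟨m₁, -, h₁, l₁⟩ := h
  rcases lt_trichotomy m₁ m₂ with hm | rfl | hm
  · exact l₁.ne' (h₂ m₁ hm)
  · exact lt_asymm l₁ l₂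
  · exact l₂.ne' (h₁ m₂ hm)

theorem _root_.SeqLexLe.eq_or_exists_block {c c' : ℕ → Δ} (h : SeqLexLe c c') {B : ℕ} (hB : 0 < B) :
    c = c' ∨ ∃ t, (∀ m < B * t, c m = c' m) ∧
      LexLtBelow B (fun j => c (B * t + j)) (fun j => c' (B * t + j)) := by
  rcases h with h | ⟨n, hpre, hlt⟩
  · exact .inl h
  have hn := Nat.div_add_mod n B
  refine .inr ⟨n / B, fun m hm => hpre m (by omega), n % B, Nat.mod_lt n hB,
    fun i hi => hpre _ (by omega), show c (B * (n / B) + n % B) < c' _ by rwa [hn]⟩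

end Lex

section LevelOrder
variable {σ Δ : Type*} [LinearOrder Δ] {K : ℕ} (δ : σ → Fin K → σ) (q₀ : σ)

def levelLt (x : ℕ → Fin K) (P : ℕ) (ψ ψ' : σ × Bool → Δ) : Prop :=
  LexLtBelow (K ^ P) (fun m => ψ (stateAt δ q₀ x P m)) (fun m => ψ' (stateAt δ q₀ x P m))

variable {δ q₀} {x : ℕ → Fin K} {P : ℕ}

theorem levelLt.not_eqOn {ψ ψ' : σ × Bool → Δ} (h : levelLt δ q₀ x P ψ ψ') :
    ¬Set.EqOn ψ ψ' (reach δ q₀ x P) := by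
  obtain ⟨m, hm, -, hlt⟩ := h
  exact fun heq => hlt.ne (heq ⟨m, hm, rfl⟩)

theorem streamLe_of_seqLexLe (hK : 0 < K) {c c' : ℕ → Δ} {F G : ℕ → σ × Bool → Δ}
    (hc : ∀ m, c m = F (m / K ^ P) (stateAt δ q₀ x P m))
    (hc' : ∀ m, c' m = G (m / K ^ P) (stateAt δ q₀ x P m)) (h : SeqLexLe c c') :
    StreamLe (reach δ q₀ x P) (levelLt δ q₀ x P) F G := by
  have hB : 0 < K ^ P := pow_pos hK P
  have hblock : ∀ (H : ℕ → σ × Bool → Δ) (d : ℕ → Δ),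
      (∀ m, d m = H (m / K ^ P) (stateAt δ q₀ x P m)) →
      ∀ t j, j < K ^ P → d (K ^ P * t + j) = H t (stateAt δ q₀ x P j) := by
    intro H d hd t j hj
    rw [hd, Nat.mul_add_div hB, Nat.div_eq_of_lt hj, Nat.add_zero, ← stateAt_mod,
      Nat.mul_add_mod, Nat.mod_eq_of_lt hj]
  rcases h.eq_or_exists_block hB with rfl | ⟨t, hpre, j₀, hj₀, hpre', hlt⟩
  · left
    rintro t _ ⟨j, hj, rfl⟩
    rw [← hblock F c hc t j hj, ← hblock G c hc' t j hj]
  · right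
    refine ⟨t, fun t' ht' => ?_, j₀, hj₀, fun j hj => ?_, ?_⟩
    · rintro _ ⟨j, hj, rfl⟩
      rw [← hblock F c hc t' j hj, ← hblock G c' hc' t' j hj]
      refine hpre _ ((Nat.add_lt_add_left hj _).trans_le ?_)
      rw [← Nat.mul_succ]
      exact Nat.mul_le_mul_left _ ht'
    · dsimp only
      rw [← hblock F c hc t j (hj.trans hj₀), ← hblock G c' hc' t j (hj.trans hj₀)]
      exact hpre' j hj
    · dsimp only
      rw [← hblock F c hc t j₀ hj₀, ← hblock G c' hc' t j₀ hj₀]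
      exact hlt

end LevelOrder

section Graft
variable {α : Type*}

def graft (f g : ℕ → α) (S T i : ℕ) : α := if i < S then f i else g (T + (i - S))

variable {f g : ℕ → α} {S T : ℕ}

theorem graft_of_lt {i : ℕ} (h : i < S) : graft f g S T i = f i := if_pos h

@[simp] theorem graft_add (j : ℕ) : graft f g S T (S + j) = g (T + j) := by simp [graft]

@[simp] theorem graft_self : graft f g S T S = g T := by simpa using graft_add (f := f) (g := g) 0

@[simp] theorem graft_zero : graft f g 0 T = fun i => g (T + i) := by
  funext i; simp [graft]

theorem graft_cycle_one (c : ℕ → α) (l : ℕ) :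
    graft (fun j => c (j % l)) (fun j => c (l + j)) l 0 = c := by
  funext j
  rcases lt_or_ge j l with hj | hj
  · rw [graft_of_lt hj, Nat.mod_eq_of_lt hj]
  · obtain ⟨j, rfl⟩ := Nat.exists_eq_add_of_le hj
    simp

theorem graft_cycle_shift (c g : ℕ → α) (l i : ℕ) :
    (fun j => graft (fun j => c (j % l)) g ((i + 1) * l) 0 (l + j)) =
      graft (fun j => c (j % l)) g (i * l) 0 := by
  funext j
  rw [Nat.succ_mul]
  rcases lt_or_ge j (i * l) with hj | hj
  · rw [graft_of_lt hj, graft_of_lt (by omega), Nat.add_mod_left]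
  · obtain ⟨j, rfl⟩ := Nat.exists_eq_add_of_le hj
    rw [show l + (i * l + j) = i * l + l + j by omega, graft_add, graft_add]

theorem graft_cycle_add_period (f : ℕ → α) {P l i : ℕ} (hi : P ≤ i) :
    graft f (fun j => f (P + j % l)) P 0 (i + l) = graft f (fun j => f (P + j % l)) P 0 i := by
  obtain ⟨j, rfl⟩ := Nat.exists_eq_add_of_le hi
  simp [Nat.add_assoc]

variable {σ Δ : Type*} {K : ℕ} {δ : σ → Fin K → σ} {q₀ : σ} {τ : σ → Δ}
  {x x' : ℕ → Fin K} {φ φ' : ℕ → σ × Bool → Δ}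

theorem Coherent.graft (h : Coherent δ x φ) (h' : Coherent δ x' φ') (hφ : φ S = φ' T) :
    Coherent δ (graft x x' S T) (graft φ φ' S T) := by
  intro i s
  rcases lt_or_ge i S with hi | hi
  · rw [graft_of_lt hi, graft_of_lt hi, h]
    obtain hi' | hi' : i + 1 < S ∨ i + 1 = S := by omega
    · rw [graft_of_lt hi']
    · rw [hi', hφ, graft_self]
  · obtain ⟨j, rfl⟩ := Nat.exists_eq_add_of_le hi
    rw [graft_add, graft_add, Nat.add_assoc, graft_add, h', Nat.add_assoc]

theorem Coherent.cycle (h : Coherent δ x φ) {l : ℕ} (hl : 0 < l) (hφ : φ l = φ 0) :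
    Coherent δ (fun j => x (j % l)) (fun j => φ (j % l)) := by
  intro i s
  simp only
  rw [h (i % l), ← Nat.mod_add_mod]
  obtain hlt | heq : i % l + 1 < l ∨ i % l + 1 = l := by have := Nat.mod_lt i hl; omega
  · rw [Nat.mod_eq_of_lt hlt]
  · rw [heq, Nat.mod_self, hφ]

theorem Realizable.graft (hK : 0 < K) (h : Realizable δ q₀ τ x φ) (h' : Realizable δ q₀ τ x' φ')
    (hreach : reach δ q₀ x S = reach δ q₀ x' T) :
    Realizable δ q₀ τ (graft x x' S T) (graft φ φ' S T) := by
  intro i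
  rcases lt_or_ge i S with hi | hi
  · rw [reach_congr fun j hj => graft_of_lt (hj.trans hi), graft_of_lt hi]
    exact h i
  · obtain ⟨j, rfl⟩ := Nat.exists_eq_add_of_le hi
    rw [reach_add_eq_of_eq hK (y := x') (Q := T) ?_ j fun j _ => graft_add j, graft_add]
    · exact h' (T + j)
    · rw [reach_congr fun j hj => graft_of_lt hj, hreach]

end Graft

section Cycle
variable {σ Δ : Type*} {K : ℕ} {δ : σ → Fin K → σ}

theorem eqOn_blockOut_of_shift (hK : 1 < K) {x₁ x₂ : ℕ → Fin K} {φ₁ φ₂ : ℕ → σ × Bool → Δ}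
    (h₁ : Coherent δ x₁ φ₁) (h₂ : Coherent δ x₂ φ₂) {L : ℕ} (hx : ∀ j < L, x₁ j = x₂ j)
    {A A' : Set (σ × Bool)} (hA : ∀ s ∈ A, ∀ t, runSub δ (takeDigits x₁ L) t s ∈ A')
    (h : ∀ t, Set.EqOn (blockOut δ (fun j => x₁ (L + j)) (fun j => φ₁ (L + j)) t)
      (blockOut δ (fun j => x₂ (L + j)) (fun j => φ₂ (L + j)) t) A') (t : ℕ) :
    Set.EqOn (blockOut δ x₁ φ₁ t) (blockOut δ x₂ φ₂ t) A := by
  intro s hs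
  rw [h₁.blockOut_eq_shift hK L, h₂.blockOut_eq_shift hK L, ← takeDigits_congr hx]
  exact h _ (hA s hs t)

theorem eqOn_blockOut_cycle (hK : 1 < K) {y : ℕ → Fin K} {ψ : ℕ → σ × Bool → Δ}
    (hcoh : Coherent δ y ψ) {l : ℕ} (hl : 0 < l) (hψ : ψ l = ψ 0) {A : Set (σ × Bool)}
    (hA : ∀ s ∈ A, ∀ t, runSub δ (takeDigits y l) t s ∈ A)
    (heq : ∀ t, Set.EqOn (blockOut δ y ψ t)
      (blockOut δ (fun j => y (l + j)) (fun j => ψ (l + j)) t) A) (t : ℕ) :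
    Set.EqOn (blockOut δ (fun j => y (j % l)) (fun j => ψ (j % l)) t) (blockOut δ y ψ t) A := by
  -- `Y i` is `i` copies of the first `l` digits followed by the future at level `l`, so `Y 1` is
  -- `y` itself; by induction on `i` all of them have the same blocks on `A`.
  set Yx : ℕ → ℕ → Fin K := fun i => graft (fun j => y (j % l)) (fun j => y (l + j)) (i * l) 0
  set Yψ : ℕ → ℕ → σ × Bool → Δ :=
    fun i => graft (fun j => ψ (j % l)) (fun j => ψ (l + j)) (i * l) 0
  have hYcoh : ∀ i, Coherent δ (Yx i) (Yψ i) := fun i =>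
    (hcoh.cycle hl hψ).graft (hcoh.shift l) (by simp [Nat.mul_mod_left, hψ])
  have hY₀ : Yx 0 = (fun j => y (l + j)) ∧ Yψ 0 = fun j => ψ (l + j) := by simp [Yx, Yψ]
  have hY₁ : Yx 1 = y ∧ Yψ 1 = ψ := by
    simp only [Yx, Yψ, Nat.one_mul, graft_cycle_one, and_self]
  have hchain : ∀ i t, Set.EqOn (blockOut δ (Yx i) (Yψ i) t) (blockOut δ (Yx 0) (Yψ 0) t) A := by
    intro i
    induction i with
    | zero => exact fun t => Set.eqOn_refl _ _
    | succ i ih =>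
      intro t
      have hpre : ∀ j < l, Yx (i + 1) j = y j := fun j hj => by
        simp only [Yx]
        rw [graft_of_lt (by nlinarith), Nat.mod_eq_of_lt hj]
      refine (eqOn_blockOut_of_shift hK (hYcoh (i + 1)) (hYcoh 1) (L := l) (A' := A)
        (fun j hj => by rw [hpre j hj, hY₁.1]) (fun s hs t => ?_) ?_ t).trans ?_
      · rw [takeDigits_congr hpre]
        exact hA s hs t
      · simpa only [Yx, Yψ, graft_cycle_shift] using ih
      · rw [hY₁.1, hY₁.2, hY₀.1, hY₀.2]
        exact heq t
  have hlong : ∀ j ≤ t + 1, j < (t + 2) * l := fun j hj => by nlinarith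
  rw [blockOut_congr (x' := Yx (t + 2)) (φ' := Yψ (t + 2))
    (fun j hj => (graft_of_lt (hlong j (by omega))).symm) (graft_of_lt (hlong _ le_rfl)).symm]
  refine (hchain (t + 2) t).trans ?_
  rw [hY₀.1, hY₀.2]
  exact (heq t).symm

end Cycle

section Exchange
variable {σ Δ : Type*} [LinearOrder Δ] {K : ℕ} {δ : σ → Fin K → σ} {q₀ : σ} {τ : σ → Δ}
  {a : ℕ → Δ} {x : ℕ → Fin K} {φ : ℕ → σ × Bool → Δ}

/-- Continuing the digits below `S` by the future at `T` gives another element of the closure, which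
the least element cannot exceed. -/
theorem streamLe_graft (hK : 1 < K) (ha : ∀ w : List (Fin K), a (digitsValue w) = τ (w.foldl δ q₀))
    (hcoh : Coherent δ x φ) (hreal : Realizable δ q₀ τ x φ)
    (hleast : ∀ c, InRevOrbitClosure a c → SeqLexLe (repSeq δ q₀ x φ) c) {S T : ℕ}
    (hφ : φ S = φ T) (hreach : reach δ q₀ x S = reach δ q₀ x T) :
    StreamLe (reach δ q₀ x S) (levelLt δ q₀ x S)
      (blockOut δ (fun j => x (S + j)) (fun j => φ (S + j)))
      (blockOut δ (fun j => x (T + j)) (fun j => φ (T + j))) := by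
  have hcoh' := hcoh.graft hcoh hφ
  refine streamLe_of_seqLexLe (by omega) (hcoh.repSeq_eq hK S) (fun m => ?_)
    (hleast _ (hcoh'.inRevOrbitClosure hK ha (hreal.graft (by omega) hreal hreach)))
  rw [hcoh'.repSeq_eq hK S, stateAt_congr fun i hi => graft_of_lt hi]
  simp only [graft_add]

/-- Two levels with the same output function, reachable states and order on blocks bound a
period: the least element is also represented by the digits and outputs repeated periodically
from the first of them on. -/
theorem exists_periodic_rep [Finite σ] [Finite Δ] (hK : 1 < K)
    (ha : ∀ w : List (Fin K), a (digitsValue w) = τ (w.foldl δ q₀))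
    (hcoh : Coherent δ x φ) (hreal : Realizable δ q₀ τ x φ)
    (hleast : ∀ c, InRevOrbitClosure a c → SeqLexLe (repSeq δ q₀ x φ) c) :
    ∃ (x' : ℕ → Fin K) (φ' : ℕ → σ × Bool → Δ) (P l : ℕ), 0 < l ∧
      (∀ i, P ≤ i → x' (i + l) = x' i) ∧ (∀ i, P ≤ i → φ' (i + l) = φ' i) ∧
      Coherent δ x' φ' ∧ repSeq δ q₀ x φ = repSeq δ q₀ x' φ' := by
  obtain ⟨P, Q, hPQ, hdata⟩ := Set.Finite.exists_lt_map_eq_of_forall_mem (t := Set.univ)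
    (f := fun P => (φ P, reach δ q₀ x P, levelLt (Δ := Δ) δ q₀ x P)) (fun _ => Set.mem_univ _)
    Set.finite_univ
  simp only [Prod.mk.injEq] at hdata
  obtain ⟨hφ, hreach, hlt⟩ := hdata
  obtain ⟨l, rfl⟩ : ∃ l, Q = P + l := ⟨Q - P, by omega⟩
  have heq : ∀ t, Set.EqOn (blockOut δ (fun j => x (P + j)) (fun j => φ (P + j)) t)
      (blockOut δ (fun j => x (P + l + j)) (fun j => φ (P + l + j)) t) (reach δ q₀ x P) := by
    have h₂ := streamLe_graft hK ha hcoh hreal hleast hφ.symm hreach.symm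
    rw [← hreach, ← hlt] at h₂
    exact (streamLe_graft hK ha hcoh hreal hleast hφ hreach).eqOn
      (fun _ _ h => h.not_eqOn) (fun _ _ h => h.not_lexLtBelow) h₂
  have hl : 0 < l := by omega
  have hψ : φ (P + l) = φ (P + 0) := hφ.symm
  have hper := hcoh.graft ((hcoh.shift P).cycle hl hψ) (S := P) (T := 0) (by simp)
  refine ⟨_, _, P, l, hl, fun i hi => graft_cycle_add_period x hi,
    fun i hi => graft_cycle_add_period φ hi, hper, funext fun m => ?_⟩
  rw [hcoh.repSeq_eq hK P, hper.repSeq_eq hK P, stateAt_congr fun i hi => graft_of_lt hi]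
  simp only [graft_add, Nat.zero_add]
  refine (eqOn_blockOut_cycle hK (hcoh.shift P) hl hψ (fun s hs t => ?_) ?_ _
    (stateAt_mem_reach (by omega) x P m)).symm
  · rw [hreach]
    exact runSub_mem_reach (by omega) hs l t
  · simpa only [Nat.add_assoc] using heq

end Exchange

section Periodic
variable {σ Δ : Type*} {K : ℕ} {δ : σ → Fin K → σ} {q₀ : σ} {x : ℕ → Fin K}
  {φ : ℕ → σ × Bool → Δ}

theorem levelRun_subStep (x : ℕ → Fin K) (w : List (Fin K)) (i : ℕ) (s : σ × Bool) :
    levelRun (fun i s d => subStep δ (x i) d s) i s w =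
      runSub δ (takeDigits (fun j => x (i + j)) w.length) (digitsValue w) s := by
  induction w generalizing i s with
  | nil => rfl
  | cons d w ih =>
    rw [levelRun, ih, List.length_cons, Nat.add_comm w.length, takeDigits_add, runSub_append,
      digitsValue_cons]
    simp [takeDigits, runSub, Nat.add_mul_div_left _ _ d.pos, Nat.div_eq_of_lt d.isLt,
      Nat.mod_eq_of_lt d.isLt, Nat.add_assoc]

theorem Coherent.isKAutomatic_repSeq [Finite σ] (hK : 1 < K) (hcoh : Coherent δ x φ) {P l : ℕ}
    (hl : 0 < l) (hx : ∀ i, P ≤ i → x (i + l) = x i) (hφ : ∀ i, P ≤ i → φ (i + l) = φ i) :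
    IsKAutomatic K (repSeq δ q₀ x φ) := by
  refine isKAutomatic_of_finite_tails (fun i s d => subStep δ (x i) d s) φ (q₀, false)
    (finite_range_tails (P := P) (g := fun i => ((fun s (d : Fin K) => subStep δ (x i) d s), φ i))
      (fun i hi => by simp only [hx i hi, hφ i hi]) hl) fun w => ?_
  rw [levelRun_subStep, repSeq, hcoh.blockOut_eq hK (digitsValue_lt hK w)]
  simp

end Periodic

end RevOrbitLexLeast

open RevOrbitLexLeast

/-- If `a` is `k`-automatic, then the lexicographically least sequence in the
reverse orbit closure of `a` is `k`-automatic. -/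
theorem lexLeast_revOrbitClosure_automatic {Δ : Type*} [Fintype Δ]
    [LinearOrder Δ] (k : ℕ) (hk : 2 ≤ k) (a b : ℕ → Δ) (ha : IsKAutomatic k a)
    (hb : InRevOrbitClosure a b)
    (hleast : ∀ c : ℕ → Δ, InRevOrbitClosure a c → SeqLexLe b c) :
    IsKAutomatic k b := by
  obtain ⟨N, δ, q₀, τ, hτ⟩ := ha
  have ha : ∀ w : List (Fin k), a (digitsValue w) = τ (w.foldl δ q₀) := fun w => hτ _ w rfl
  obtain ⟨x, φ, hcoh, hreal, rfl⟩ := exists_rep hk ha hb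
  obtain ⟨x', φ', P, l, hl, hx', hφ', hcoh', heq⟩ := exists_periodic_rep hk ha hcoh hreal hleast
  rw [heq]
  exact hcoh'.isKAutomatic_repSeq hk hl hx' hφ'
end
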